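/- arXiv:1105.1888 — 8 statements merged into one kernel-verified Lean document; each statement's English description precedes it below -/
import Mathlib

section
/- Let a > 0, let m = (m_1,...,m_n) and M = (M_1,...,M_n) be vectors arranged in nonincreasing order with 0 ≤ m_i ≤ M_i for all i, and ⟨m,s^n⟩ ≤ a ≤ ⟨M,s^n⟩. Let k ≥ 0 be the smallest integer such that ⟨M,s^k⟩ + ⟨m,v^k⟩ ≤ a < ⟨M,s^{k+1}⟩ + ⟨m,v^{k+1}⟩, and set θ = a − ⟨M,s^k⟩ − ⟨m,v^{k+1}⟩. Then the vector x* = M∘s^k + θ e^{k+1} + m∘v^{k+1} belongs to S_a and every x ∈ S_a is majorized by x*, i.e. x ⊴ x* for all x ∈ S_a. -/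
/-!
Let `φ j = ⟨M, s^j⟩ + ⟨m, v^j⟩`. Since `φ (j+1) - φ j = M_{j+1} - m_{j+1} ≥ 0` and `φ` is constant
from `j = n` on, the bracket `φ k ≤ a < φ (k+1)` forces `k < n` and `m_{k+1} ≤ θ < M_{k+1}`.
Hence `x*`, which takes the upper bounds before position `k+1`, the value `θ` there and the
lower bounds after it, is a nonincreasing vector of `S_a`. Every `x ∈ S_a` lies below `x*` before
that position and above it after, so with equal totals the partial sums of `x*` dominate those of `x`.
-/
open Finset

noncomputable section

/-- `sv n j` is the vector `s^j ∈ ℝ^n`: first `j` components equal `1`, the rest `0`. -/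
def sv (n j : ℕ) : Fin n → ℝ := fun i => if (i : ℕ) < j then 1 else 0

/-- `vv n j = s^n - s^j`: first `j` components equal `0`, the rest `1`. -/
def vv (n j : ℕ) : Fin n → ℝ := fun i => if (i : ℕ) < j then 0 else 1

/-- `ev n j` is the `j`-th standard basis vector (`j` counted from `1`). -/
def ev (n j : ℕ) : Fin n → ℝ := fun i => if (i : ℕ) + 1 = j then 1 else 0

/-- Standard inner product on `ℝ^n`. -/
def inn {n : ℕ} (x y : Fin n → ℝ) : ℝ := ∑ i, x i * y i

/-- Hadamard (componentwise) product. -/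
def had {n : ℕ} (x y : Fin n → ℝ) : Fin n → ℝ := fun i => x i * y i

/-- Sum of the first `k` components. -/
def psum {n : ℕ} (x : Fin n → ℝ) (k : ℕ) : ℝ := ∑ i : Fin n, if (i : ℕ) < k then x i else 0

/-- Majorization order: `x ⊴ y` (for vectors with nonincreasing components). -/
def Maj {n : ℕ} (x y : Fin n → ℝ) : Prop :=
  (∀ k : ℕ, 1 ≤ k → k ≤ n - 1 → psum x k ≤ psum y k) ∧ (∑ i, x i = ∑ i, y i)

/-- `Σ_a = {x ∈ ℝ^n : x_1 ≥ ... ≥ x_n ≥ 0, Σ x_i = a}`. -/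
def SigmaSet (n : ℕ) (a : ℝ) : Set (Fin n → ℝ) :=
  {x | (∀ i j : Fin n, i ≤ j → x j ≤ x i) ∧ (∀ i, 0 ≤ x i) ∧ (∑ i, x i = a)}

namespace Majorization

variable {n : ℕ}

lemma sv_eq_one_of_le {j : ℕ} (hj : n ≤ j) : sv n j = 1 := by
  funext i
  simp [sv, i.isLt.trans_le hj]

lemma vv_eq_zero_of_le {j : ℕ} (hj : n ≤ j) : vv n j = 0 := by
  funext i
  simp [vv, i.isLt.trans_le hj]

lemma sv_succ_apply {j : ℕ} (hj : j < n) (i : Fin n) :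
    sv n (j + 1) i = sv n j i + if i = ⟨j, hj⟩ then 1 else 0 := by
  simp only [sv, Fin.ext_iff]
  split_ifs <;> (try norm_num) <;> omega

lemma vv_apply_eq_add_vv_succ {j : ℕ} (hj : j < n) (i : Fin n) :
    vv n j i = (if i = ⟨j, hj⟩ then 1 else 0) + vv n (j + 1) i := by
  simp only [vv, Fin.ext_iff]
  split_ifs <;> (try norm_num) <;> omega

lemma ev_succ_apply {j : ℕ} (hj : j < n) (i : Fin n) :
    ev n (j + 1) i = if i = ⟨j, hj⟩ then 1 else 0 := by
  simp only [ev, Fin.ext_iff, Nat.add_right_cancel_iff]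

lemma inn_sv_succ (x : Fin n → ℝ) {j : ℕ} (hj : j < n) :
    inn x (sv n (j + 1)) = inn x (sv n j) + x ⟨j, hj⟩ := by
  simp only [inn, sv_succ_apply hj, mul_add, sum_add_distrib, mul_ite, mul_one, mul_zero,
    sum_ite_eq', mem_univ, if_true]

lemma inn_vv_eq_add_inn_vv_succ (x : Fin n → ℝ) {j : ℕ} (hj : j < n) :
    inn x (vv n j) = x ⟨j, hj⟩ + inn x (vv n (j + 1)) := by
  simp only [inn, vv_apply_eq_add_vv_succ hj, mul_add, sum_add_distrib, mul_ite, mul_one,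
    mul_zero, sum_ite_eq', mem_univ, if_true]

lemma sum_ev_succ {j : ℕ} (hj : j < n) : ∑ i, ev n (j + 1) i = 1 := by
  simp only [ev_succ_apply hj, sum_ite_eq', mem_univ, if_true]

/-- `⟨M, s^j⟩ + ⟨m, v^j⟩` is constant from `j = n` on. -/
lemma lt_of_inn_bracket {M m : Fin n → ℝ} {a : ℝ} {j : ℕ}
    (h : inn M (sv n j) + inn m (vv n j) ≤ a ∧
      a < inn M (sv n (j + 1)) + inn m (vv n (j + 1))) : j < n := by
  by_contra! hnj
  rw [sv_eq_one_of_le hnj, vv_eq_zero_of_le hnj, sv_eq_one_of_le (hnj.trans j.le_succ),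
    vv_eq_zero_of_le (hnj.trans j.le_succ)] at h
  exact h.1.not_gt h.2

lemma psum_le_psum_of_crossing {x y : Fin n → ℝ} (k : ℕ) (hsum : ∑ i, x i = ∑ i, y i)
    (hlow : ∀ i : Fin n, (i : ℕ) < k → x i ≤ y i)
    (hhigh : ∀ i : Fin n, k < (i : ℕ) → y i ≤ x i) (j : ℕ) : psum x j ≤ psum y j := by
  rcases le_or_gt j k with hjk | hkj
  · exact sum_le_sum fun i _ => by
      split_ifs with hij
      exacts [hlow i (hij.trans_le hjk), le_rfl]
  · have hsplit : ∀ z : Fin n → ℝ,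
        psum z j = ∑ i, z i - ∑ i : Fin n, if (i : ℕ) < j then 0 else z i := fun z => by
      rw [eq_sub_iff_add_eq, psum, ← sum_add_distrib]
      exact sum_congr rfl fun i _ => by split_ifs <;> simp
    have htail : (∑ i : Fin n, if (i : ℕ) < j then 0 else y i) ≤
        ∑ i : Fin n, if (i : ℕ) < j then 0 else x i := sum_le_sum fun i _ => by
      split_ifs with hij
      exacts [le_rfl, hhigh i (hkj.trans_le (not_lt.mp hij))]
    rw [hsplit x, hsplit y, hsum]
    linarith

lemma maj_of_crossing {x y : Fin n → ℝ} (k : ℕ) (hsum : ∑ i, x i = ∑ i, y i)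
    (hlow : ∀ i : Fin n, (i : ℕ) < k → x i ≤ y i)
    (hhigh : ∀ i : Fin n, k < (i : ℕ) → y i ≤ x i) : Maj x y :=
  ⟨fun j _ _ => psum_le_psum_of_crossing k hsum hlow hhigh j, hsum⟩

def splice (M m : Fin n → ℝ) (k : Fin n) (θ : ℝ) : Fin n → ℝ :=
  fun i => if i < k then M i else if i = k then θ else m i

section splice

variable {M m : Fin n → ℝ} {k : Fin n} {θ : ℝ}

lemma splice_of_lt {i : Fin n} (hi : i < k) : splice M m k θ i = M i := if_pos hi

lemma splice_self : splice M m k θ k = θ := by simp [splice]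

lemma splice_of_gt {i : Fin n} (hi : k < i) : splice M m k θ i = m i := by
  simp [splice, hi.not_gt, hi.ne']

lemma splice_eq_had_add :
    (fun i => had M (sv n k) i + θ * ev n (k + 1) i + had m (vv n (k + 1)) i) =
      splice M m k θ := by
  funext i
  simp only [had, sv, vv, ev_succ_apply k.isLt, splice, Fin.lt_def, Fin.ext_iff]
  split_ifs <;> first | omega | ring

lemma sum_splice :
    ∑ i, splice M m k θ i = inn M (sv n k) + θ + inn m (vv n (k + 1)) := by
  rw [← splice_eq_had_add, sum_add_distrib, sum_add_distrib, ← mul_sum, sum_ev_succ k.isLt,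
    mul_one]
  rfl

lemma mem_Icc_splice (hmM : m ≤ M) (hmθ : m k ≤ θ) (hθM : θ ≤ M k) (i : Fin n) :
    m i ≤ splice M m k θ i ∧ splice M m k θ i ≤ M i := by
  rcases lt_trichotomy i k with hi | rfl | hi
  · rw [splice_of_lt hi]; exact ⟨hmM i, le_rfl⟩
  · rw [splice_self]; exact ⟨hmθ, hθM⟩
  · rw [splice_of_gt hi]; exact ⟨le_rfl, hmM i⟩

/-- `θ` separates the entries up to `k` from those from `k` on. -/
lemma antitone_splice (hM : Antitone M) (hm : Antitone m) (hmθ : m k ≤ θ) (hθM : θ ≤ M k) :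
    Antitone (splice M m k θ) := by
  have hhead : ∀ i, i ≤ k → θ ≤ splice M m k θ i := fun i hi => by
    rcases hi.lt_or_eq with hi | rfl
    · rw [splice_of_lt hi]; exact hθM.trans (hM hi.le)
    · rw [splice_self]
  have htail : ∀ i, k ≤ i → splice M m k θ i ≤ θ := fun i hi => by
    rcases hi.lt_or_eq with hi | rfl
    · rw [splice_of_gt hi]; exact (hm hi.le).trans hmθ
    · rw [splice_self]
  intro i j hij
  rcases lt_or_ge j k with hj | hj
  · rw [splice_of_lt hj, splice_of_lt (hij.trans_lt hj)]; exact hM hij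
  rcases le_or_gt i k with hi | hi
  · exact (htail j hj).trans (hhead i hi)
  · rw [splice_of_gt hi, splice_of_gt (hi.trans_le hij)]; exact hm hij

end splice

end Majorization

open Majorization

theorem maximal_element_of_Sa_general (n : ℕ) (a : ℝ) (m M : Fin n → ℝ)
    (hm_dec : ∀ i j : Fin n, i ≤ j → m j ≤ m i)
    (hM_dec : ∀ i j : Fin n, i ≤ j → M j ≤ M i)
    (hmM : ∀ i, 0 ≤ m i ∧ m i ≤ M i)
    (k : ℕ)
    (hk : inn M (sv n k) + inn m (vv n k) ≤ a ∧
          a < inn M (sv n (k + 1)) + inn m (vv n (k + 1)))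
    (θ : ℝ) (hθ : θ = a - inn M (sv n k) - inn m (vv n (k + 1)))
    (xstar : Fin n → ℝ)
    (hxstar : xstar = fun i => had M (sv n k) i + θ * ev n (k + 1) i + had m (vv n (k + 1)) i)
    (Sa : Set (Fin n → ℝ))
    (hSa : Sa = SigmaSet n a ∩ {x | ∀ i, m i ≤ x i ∧ x i ≤ M i}) :
    xstar ∈ Sa ∧ ∀ x ∈ Sa, Maj x xstar := by
  have hkn : k < n := lt_of_inn_bracket hk
  -- the paper's position `k + 1`, counted from `0`
  set kF : Fin n := ⟨k, hkn⟩
  have hmθ : m kF ≤ θ := by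
    linarith [hk.1, inn_vv_eq_add_inn_vv_succ m hkn]
  have hθM : θ ≤ M kF := by
    linarith [hk.2, inn_sv_succ M hkn]
  have hx : xstar = splice M m kF θ := hxstar.trans (splice_eq_had_add (k := kF))
  subst hx hSa
  have hsum : ∑ i, splice M m kF θ i = a := by rw [sum_splice, hθ]; ring
  have hbounds := mem_Icc_splice (fun i => (hmM i).2) hmθ hθM
  have hanti := antitone_splice (fun i j h => hM_dec i j h) (fun i j h => hm_dec i j h) hmθ hθM
  refine ⟨⟨⟨fun i j h => hanti h, fun i => (hmM i).1.trans (hbounds i).1, hsum⟩, hbounds⟩, ?_⟩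
  rintro x ⟨⟨-, -, hxsum⟩, hxb⟩
  refine maj_of_crossing k (hxsum.trans hsum.symm) (fun i hi => ?_) (fun i hi => ?_)
  · rw [splice_of_lt (show i < kF from hi)]; exact (hxb i).2
  · rw [splice_of_gt (show kF < i from hi)]; exact (hxb i).1

/-- The vector `x* = M∘s^k + θ e^{k+1} + m∘v^{k+1}` belongs to `S_a` and majorizes
every element of `S_a`. -/
theorem maximal_element_of_Sa (n : ℕ) (a : ℝ) (ha : 0 < a) (m M : Fin n → ℝ)
    (hm_dec : ∀ i j : Fin n, i ≤ j → m j ≤ m i)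
    (hM_dec : ∀ i j : Fin n, i ≤ j → M j ≤ M i)
    (hmM : ∀ i, 0 ≤ m i ∧ m i ≤ M i)
    (hma : inn m (sv n n) ≤ a) (haM : a ≤ inn M (sv n n))
    (k : ℕ)
    (hk : inn M (sv n k) + inn m (vv n k) ≤ a ∧
          a < inn M (sv n (k + 1)) + inn m (vv n (k + 1)))
    (hkmin : ∀ j : ℕ,
      (inn M (sv n j) + inn m (vv n j) ≤ a ∧
        a < inn M (sv n (j + 1)) + inn m (vv n (j + 1))) → k ≤ j)
    (θ : ℝ) (hθ : θ = a - inn M (sv n k) - inn m (vv n (k + 1)))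
    (xstar : Fin n → ℝ)
    (hxstar : xstar = fun i => had M (sv n k) i + θ * ev n (k + 1) i + had m (vv n (k + 1)) i)
    (Sa : Set (Fin n → ℝ))
    (hSa : Sa = SigmaSet n a ∩ {x | ∀ i, m i ≤ x i ∧ x i ≤ M i}) :
    xstar ∈ Sa ∧ ∀ x ∈ Sa, Maj x xstar :=
  maximal_element_of_Sa_general n a m M hm_dec hM_dec hmM k hk θ hθ xstar hxstar Sa hSa
end
end

section
/- Let 1 ≤ h ≤ n, 0 ≤ m_2 ≤ m_1, 0 ≤ M_2 ≤ M_1, m_i < M_i for i = 1,2, and h·m_1 + (n−h)·m_2 ≤ a ≤ h·M_1 + (n−h)·M_2. Set a* = h·M_1 + (n−h)·m_2. If a < a*, let k = ⌊(a − h(m_1 − m_2) − n·m_2)/(M_1 − m_1)⌋ and θ = a − ⟨M, s^k⟩ − ⟨m, v^{k+1}⟩ where M = M_1 s^h + M_2 v^h and m = m_1 s^h + m_2 v^h. Then the maximal element of S_a^[h] with respect to the majorization order is the vector whose first k components equal M_1, whose (k+1)-st component equals θ, whose next h−k−1 components equal m_1, and whose last n−h components equal m_2. -/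
open Finset

noncomputable section

/-- `S_a^[h] = Σ_a ∩ {x : M₁ ≥ x_1 ≥ ... ≥ x_h ≥ m₁, M₂ ≥ x_{h+1} ≥ ... ≥ x_n ≥ m₂}`. -/
def Sh (n h : ℕ) (a M1 M2 m1 m2 : ℝ) : Set (Fin n → ℝ) :=
  SigmaSet n a ∩
    {x | (∀ i : Fin n, (i : ℕ) < h → m1 ≤ x i ∧ x i ≤ M1) ∧
         (∀ i : Fin n, h ≤ (i : ℕ) → m2 ≤ x i ∧ x i ≤ M2)}

/-! The candidate fills the first `k` entries up to `M₁` and all entries after the `(k+1)`-st down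
to their lower bounds; `θ` is the mass left over, and the floor defining `k` is exactly what puts
`θ` in `[m₁, M₁)`, while `a < a*` forces `k < h`. Any `x` in the set lies below the candidate on
the first `k` entries and above it after the `(k+1)`-st: a single crossing, which together with equal
sums gives majorization. -/

lemma sum_ite_lt {n j : ℕ} (hj : j ≤ n) (c d : ℝ) :
    ∑ i : Fin n, (if (i : ℕ) < j then c else d) = j * c + (n - j : ℝ) * d := by
  rw [Fin.sum_univ_eq_sum_range (fun i => if i < j then c else d), ← sum_range_add_sum_Ico _ hj,
    sum_congr rfl fun i hi => if_pos (mem_range.mp hi),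
    sum_congr rfl fun i hi => if_neg (not_lt.mpr (mem_Ico.mp hi).1)]
  simp [Nat.cast_sub hj]

lemma psum_eq_sum_sub_sum_ite {n : ℕ} (x : Fin n → ℝ) (j : ℕ) :
    psum x j = ∑ i, x i - ∑ i : Fin n, (if (i : ℕ) < j then 0 else x i) := by
  rw [psum, ← sum_sub_distrib]
  exact sum_congr rfl fun i _ => by split_ifs <;> ring

lemma psum_ite_lt_of_le {n h k : ℕ} (hkh : k ≤ h) (hkn : k ≤ n) (c d : ℝ) :
    psum (fun i : Fin n => if (i : ℕ) < h then c else d) k = k * c := by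
  rw [psum, sum_congr rfl fun (i : Fin n) _ => show
      (if (i : ℕ) < k then (if (i : ℕ) < h then c else d) else 0) = if (i : ℕ) < k then c else 0 by
    split_ifs <;> first | rfl | omega, sum_ite_lt hkn]
  ring

lemma inn_sv {n : ℕ} (x : Fin n → ℝ) (k : ℕ) : inn x (sv n k) = psum x k := by
  simp only [inn, sv, psum, mul_ite, mul_one, mul_zero]

lemma inn_vv {n : ℕ} (x : Fin n → ℝ) (k : ℕ) : inn x (vv n k) = ∑ i, x i - psum x k := by
  rw [psum_eq_sum_sub_sum_ite]
  simp only [inn, vv, mul_ite, mul_one, mul_zero, sub_sub_cancel]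

lemma mul_sv_add_mul_vv (n h : ℕ) (c d : ℝ) :
    (fun i => c * sv n h i + d * vv n h i) = fun i : Fin n => if (i : ℕ) < h then c else d := by
  funext i
  simp only [sv, vv]
  split_ifs <;> ring

def greedyVector (n h k : ℕ) (M1 θ m1 m2 : ℝ) : Fin n → ℝ := fun i =>
  if (i : ℕ) < k then M1 else if (i : ℕ) = k then θ else if (i : ℕ) < h then m1 else m2

lemma sum_greedyVector {n h k : ℕ} (hkh : k < h) (hhn : h ≤ n) (M1 θ m1 m2 : ℝ) :
    ∑ i, greedyVector n h k M1 θ m1 m2 i = k * M1 + θ + (h - (k + 1)) * m1 + (n - h) * m2 := by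
  have hsplit : ∀ i : Fin n, greedyVector n h k M1 θ m1 m2 i = (if (i : ℕ) < k then M1 - θ else 0) +
      (if (i : ℕ) < k + 1 then θ - m1 else 0) + (if (i : ℕ) < h then m1 else m2) := by
    intro i
    simp only [greedyVector]
    split_ifs <;> first | omega | ring
  simp only [hsplit, sum_add_distrib, sum_ite_lt (show k ≤ n by omega),
    sum_ite_lt (show k + 1 ≤ n by omega), sum_ite_lt hhn]
  push_cast
  ring

section

variable {n h k : ℕ} {a M1 M2 m1 m2 θ : ℝ}

lemma greedyVector_mem_Sh (hkh : k < h) (hm2 : 0 ≤ m2) (hm21 : m2 ≤ m1) (hθm1 : m1 ≤ θ)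
    (hθM1 : θ ≤ M1) (hmM2 : m2 ≤ M2) (hsum : ∑ i, greedyVector n h k M1 θ m1 m2 i = a) :
    greedyVector n h k M1 θ m1 m2 ∈ Sh n h a M1 M2 m1 m2 := by
  have hθ0 : 0 ≤ θ := by linarith
  refine ⟨⟨fun i j hij => ?_, fun i => ?_, hsum⟩, fun i hi => ?_, fun i hi => ?_⟩ <;>
    simp only [greedyVector]
  · have := Fin.le_def.mp hij
    split_ifs <;> first | omega | linarith
  · split_ifs <;> linarith
  · split_ifs <;> first | omega | constructor <;> linarith
  · split_ifs <;> first | omega | exact ⟨le_rfl, hmM2⟩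

lemma maj_of_single_crossing {x y : Fin n → ℝ} (p : ℕ) (hlt : ∀ i : Fin n, (i : ℕ) < p → x i ≤ y i)
    (hgt : ∀ i : Fin n, p < (i : ℕ) → y i ≤ x i) (hsum : ∑ i, x i = ∑ i, y i) : Maj x y := by
  refine ⟨fun j _ _ => ?_, hsum⟩
  rcases le_or_gt j p with hjp | hpj
  · exact sum_le_sum fun i _ => by split_ifs with hij <;> first | exact le_rfl | exact hlt i (by omega)
  · rw [psum_eq_sum_sub_sum_ite, psum_eq_sum_sub_sum_ite, hsum]
    gcongr with i
    split_ifs with hij <;> first | exact le_rfl | exact hgt i (by omega)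

lemma maj_greedyVector_of_mem_Sh {x : Fin n → ℝ} (hx : x ∈ Sh n h a M1 M2 m1 m2) (hkh : k < h)
    (hsum : ∑ i, greedyVector n h k M1 θ m1 m2 i = a) : Maj x (greedyVector n h k M1 θ m1 m2) := by
  obtain ⟨⟨-, -, hxsum⟩, hx_head, hx_tail⟩ := hx
  refine maj_of_single_crossing k (fun i hik => ?_) (fun i hki => ?_) (hxsum.trans hsum.symm) <;>
    simp only [greedyVector]
  · rw [if_pos hik]
    exact (hx_head i (by omega)).2
  · rw [if_neg (by omega), if_neg (by omega)]
    split_ifs with hih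
    · exact (hx_head i hih).1
    · exact (hx_tail i (by omega)).1

end

lemma mul_le_and_lt_of_eq_floor_div {t d : ℝ} (hd : 0 < d) {k : ℕ} (hk : (k : ℤ) = ⌊t / d⌋) :
    k * d ≤ t ∧ t < (k + 1) * d := by
  have hfloor : (k : ℝ) = (⌊t / d⌋ : ℝ) := by exact_mod_cast hk
  exact ⟨(le_div_iff₀ hd).mp (hfloor ▸ Int.floor_le _),
    (div_lt_iff₀ hd).mp (hfloor ▸ Int.lt_floor_add_one _)⟩

theorem maximal_element_of_Sh_below_general (n h : ℕ) (hhn : h ≤ n)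
    (a m1 m2 M1 M2 : ℝ)
    (hm2 : 0 ≤ m2) (hm21 : m2 ≤ m1)
    (hmM1 : m1 < M1) (hmM2 : m2 < M2)
    (astar : ℝ) (hastar : astar = h * M1 + (n - h : ℝ) * m2)
    (hcase : a < astar)
    (k : ℕ) (hk : (k : ℤ) = ⌊(a - h * (m1 - m2) - n * m2) / (M1 - m1)⌋)
    (Mv mv : Fin n → ℝ)
    (hMv : Mv = fun i => M1 * sv n h i + M2 * vv n h i)
    (hmv : mv = fun i => m1 * sv n h i + m2 * vv n h i)
    (θ : ℝ) (hθ : θ = a - inn Mv (sv n k) - inn mv (vv n (k + 1)))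
    (xstar : Fin n → ℝ)
    (hxstar : ∀ i : Fin n, xstar i =
      if (i : ℕ) < k then M1 else if (i : ℕ) = k then θ else if (i : ℕ) < h then m1 else m2) :
    xstar ∈ Sh n h a M1 M2 m1 m2 ∧ ∀ x ∈ Sh n h a M1 M2 m1 m2, Maj x xstar := by
  have hd : 0 < M1 - m1 := sub_pos.mpr hmM1
  obtain ⟨hk_le, hk_lt⟩ := mul_le_and_lt_of_eq_floor_div hd hk
  have hkh : k < h := by
    have : (k : ℝ) * (M1 - m1) < h * (M1 - m1) := by rw [hastar] at hcase; linarith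
    exact_mod_cast lt_of_mul_lt_mul_right this hd.le
  have hθ_eq : θ = a - k * M1 - ((h - (k + 1)) * m1 + (n - h) * m2) := by
    rw [hθ, hMv, hmv, mul_sv_add_mul_vv, mul_sv_add_mul_vv, inn_sv, inn_vv, sum_ite_lt hhn,
      psum_ite_lt_of_le hkh.le (by omega), psum_ite_lt_of_le hkh (by omega)]
    push_cast
    ring
  obtain rfl : xstar = greedyVector n h k M1 θ m1 m2 := funext hxstar
  have hsum : ∑ i, greedyVector n h k M1 θ m1 m2 i = a := by
    rw [sum_greedyVector hkh hhn]
    linarith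
  exact ⟨greedyVector_mem_Sh hkh hm2 hm21 (by linarith) (by linarith) hmM2.le hsum,
    fun x hx => maj_greedyVector_of_mem_Sh hx hkh hsum⟩

/-- Corollary 3 (case `a < a*`): the maximal element of `S_a^[h]`. -/
theorem maximal_element_of_Sh_below (n h : ℕ) (hh : 1 ≤ h) (hhn : h ≤ n)
    (a m1 m2 M1 M2 : ℝ) (ha : 0 < a)
    (hm2 : 0 ≤ m2) (hm21 : m2 ≤ m1) (hM2 : 0 ≤ M2) (hM21 : M2 ≤ M1)
    (hmM1 : m1 < M1) (hmM2 : m2 < M2)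
    (halow : h * m1 + (n - h : ℝ) * m2 ≤ a) (haup : a ≤ h * M1 + (n - h : ℝ) * M2)
    (astar : ℝ) (hastar : astar = h * M1 + (n - h : ℝ) * m2)
    (hcase : a < astar)
    (k : ℕ) (hk : (k : ℤ) = ⌊(a - h * (m1 - m2) - n * m2) / (M1 - m1)⌋)
    (Mv mv : Fin n → ℝ)
    (hMv : Mv = fun i => M1 * sv n h i + M2 * vv n h i)
    (hmv : mv = fun i => m1 * sv n h i + m2 * vv n h i)
    (θ : ℝ) (hθ : θ = a - inn Mv (sv n k) - inn mv (vv n (k + 1)))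
    (xstar : Fin n → ℝ)
    (hxstar : ∀ i : Fin n, xstar i =
      if (i : ℕ) < k then M1 else if (i : ℕ) = k then θ else if (i : ℕ) < h then m1 else m2) :
    xstar ∈ Sh n h a M1 M2 m1 m2 ∧ ∀ x ∈ Sh n h a M1 M2 m1 m2, Maj x xstar :=
  maximal_element_of_Sh_below_general n h hhn a m1 m2 M1 M2 hm2 hm21 hmM1 hmM2 astar hastar hcase k
    hk Mv mv hMv hmv θ hθ xstar hxstar
end
end

section
/- Let 1 ≤ h ≤ n and 0 < α ≤ a/h. Then the maximal element with respect to the majorization order of the set S_a^2 = Σ_a ∩ {x ∈ ℝ^n : x_i ≥ α for i = 1,...,h} is x*(S_a^2) = (a − hα) e^1 + α s^h, i.e. the vector whose first component is a − (h−1)α, whose components 2 through h equal α, and whose remaining components are 0. -/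
open Finset

noncomputable section

/-- `S_a^2 = Σ_a ∩ {x : x_i ≥ α, i = 1,...,h}`. -/
def S2 (n h : ℕ) (a α : ℝ) : Set (Fin n → ℝ) :=
  SigmaSet n a ∩ {x | ∀ i : Fin n, (i : ℕ) < h → α ≤ x i}

/-! The tail sums `∑ x - psum x k` of any `x ∈ S_a^2` dominate those of `α s^h`, because
`x ≥ α s^h` coordinatewise. The candidate `(a - hα) e^1 + α s^h` differs from `α s^h` only in its
first coordinate, so for `k ≥ 1` its tail sums equal those of `α s^h`, and its partial sums are the
largest that the common total `a` allows. -/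

section PartialSums

variable {n : ℕ}

lemma psum_add (x y : Fin n → ℝ) (k : ℕ) :
    psum (fun i => x i + y i) k = psum x k + psum y k := by
  simp only [psum, ← Finset.sum_add_distrib]
  exact Finset.sum_congr rfl fun i _ => by split_ifs <;> ring

lemma psum_const_mul (c : ℝ) (x : Fin n → ℝ) (k : ℕ) :
    psum (fun i => c * x i) k = c * psum x k := by
  simp only [psum, Finset.mul_sum, mul_ite, mul_zero]

lemma psum_of_le (x : Fin n → ℝ) {k : ℕ} (hk : n ≤ k) : psum x k = ∑ i, x i :=
  Finset.sum_congr rfl fun i _ => if_pos (i.2.trans_le hk)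

lemma sum_sub_psum (x : Fin n → ℝ) (k : ℕ) :
    ∑ i, x i - psum x k = ∑ i : Fin n, if (i : ℕ) < k then 0 else x i := by
  rw [psum, sub_eq_iff_eq_add, ← Finset.sum_add_distrib]
  exact Finset.sum_congr rfl fun i _ => by split_ifs <;> ring

lemma sum_sub_psum_mono {x y : Fin n → ℝ} (hxy : ∀ i, x i ≤ y i) (k : ℕ) :
    ∑ i, x i - psum x k ≤ ∑ i, y i - psum y k := by
  rw [sum_sub_psum, sum_sub_psum]
  gcongr with i
  split_ifs
  exacts [le_rfl, hxy i]

lemma psum_sv (h k : ℕ) : psum (sv n h) k = min n (min k h) := by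
  have hcard := Fin.card_filter_val_lt (n := n) (m := min k h)
  simp only [psum, sv, ← ite_and, lt_min_iff, Finset.sum_boole] at hcard ⊢
  exact_mod_cast hcard

lemma ev_one_eq_sv_one : ev n 1 = sv n 1 := by
  ext i
  simp only [ev, sv, Nat.add_eq_right, Nat.lt_one_iff]

end PartialSums

section MaximalElement

variable {n h : ℕ} {a α : ℝ}

def maxS2 (n h : ℕ) (a α : ℝ) : Fin n → ℝ := fun i => (a - h * α) * ev n 1 i + α * sv n h i

lemma psum_maxS2 (hh : 1 ≤ h) (hhn : h ≤ n) {k : ℕ} (hk : 1 ≤ k) :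
    psum (maxS2 n h a α) k = a - α * (h - min k h) := by
  unfold maxS2
  rw [psum_add, psum_const_mul, psum_const_mul, ev_one_eq_sv_one, psum_sv, psum_sv,
    min_eq_right (by omega : min k 1 ≤ n), min_eq_right (by omega : min k h ≤ n),
    min_eq_right hk]
  push_cast
  ring

lemma psum_le_of_mem_S2 {x : Fin n → ℝ} (hx : x ∈ S2 n h a α) (hhn : h ≤ n) (k : ℕ) :
    psum x k ≤ a - α * (h - min k h) := by
  obtain ⟨⟨-, hnonneg, hsum⟩, hlower⟩ := hx
  have hsv : ∀ i, α * sv n h i ≤ x i := fun i => by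
    unfold sv
    split_ifs with hi
    · simpa using hlower i hi
    · simpa using hnonneg i
  have htail := sum_sub_psum_mono hsv k
  rw [← psum_of_le _ le_rfl, psum_const_mul, psum_const_mul, psum_sv, psum_sv, hsum,
    min_eq_right (by omega : min n h ≤ n), min_eq_right (by omega : min k h ≤ n),
    min_eq_right hhn] at htail
  linarith

lemma maxS2_mem_S2 (hh : 1 ≤ h) (hhn : h ≤ n) (hα : 0 ≤ α) (hhα : h * α ≤ a) :
    maxS2 n h a α ∈ S2 n h a α := by
  refine ⟨⟨fun i j hij => ?_, fun i => ?_, ?_⟩, fun i hi => ?_⟩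
  · have hij : (i : ℕ) ≤ j := hij
    simp only [maxS2, ev, sv]
    split_ifs <;> first | linarith | omega
  · simp only [maxS2, ev, sv]
    split_ifs <;> linarith
  · rw [← psum_of_le _ le_rfl, psum_maxS2 hh hhn (by omega), min_eq_right hhn]
    ring
  · simp only [maxS2, ev, sv]
    split_ifs <;> linarith

lemma maj_maxS2 (hh : 1 ≤ h) (hhn : h ≤ n) {x : Fin n → ℝ} (hx : x ∈ S2 n h a α) :
    Maj x (maxS2 n h a α) := by
  refine ⟨fun k hk _ => ?_, ?_⟩
  · rw [psum_maxS2 hh hhn hk]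
    exact psum_le_of_mem_S2 hx hhn k
  · rw [hx.1.2.2, ← psum_of_le _ le_rfl, psum_maxS2 hh hhn (by omega),
      min_eq_right hhn]
    ring

end MaximalElement

theorem maximal_element_of_S2_general (n h : ℕ) (hh : 1 ≤ h) (hhn : h ≤ n)
    (a α : ℝ) (hα : 0 < α) (hαa : α ≤ a / h)
    (xstar : Fin n → ℝ)
    (hxstar : xstar = fun i => (a - h * α) * ev n 1 i + α * sv n h i) :
    xstar ∈ S2 n h a α ∧ ∀ x ∈ S2 n h a α, Maj x xstar := by
  have hhα : h * α ≤ a := by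
    rwa [le_div_iff₀ (by exact_mod_cast hh), mul_comm] at hαa
  obtain rfl : xstar = maxS2 n h a α := hxstar
  exact ⟨maxS2_mem_S2 hh hhn hα.le hhα, fun x hx => maj_maxS2 hh hhn hx⟩

/-- The maximal element of `S_a^2` is `(a - hα) e^1 + α s^h`. -/
theorem maximal_element_of_S2 (n h : ℕ) (hh : 1 ≤ h) (hhn : h ≤ n)
    (a α : ℝ) (ha : 0 < a) (hα : 0 < α) (hαa : α ≤ a / h)
    (xstar : Fin n → ℝ)
    (hxstar : xstar = fun i => (a - h * α) * ev n 1 i + α * sv n h i) :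
    xstar ∈ S2 n h a α ∧ ∀ x ∈ S2 n h a α, Maj x xstar :=
  maximal_element_of_S2_general n h hh hhn a α hα hαa xstar hxstar
end
end

section
/- Let a > 0, let m = (m_1,...,m_n) and M = (M_1,...,M_n) be vectors arranged in nonincreasing order with 0 ≤ m_i ≤ M_i for all i, and ⟨m,s^n⟩ ≤ a ≤ ⟨M,s^n⟩. Let k ≥ 0 and d ≥ 0 be the smallest integers such that k + d < n and m_{k+1} ≤ ρ ≤ M_{n−d}, where ρ = (a − ⟨m, s^k⟩ − ⟨M, v^{n−d}⟩)/(n − k − d). Then the vector x_* = m∘s^k + ρ(s^{n−d} − s^k) + M∘v^{n−d} belongs to S_a and x_* is majorized by every x ∈ S_a, i.e. x_* ⊴ x for all x ∈ S_a. -/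
/-!
Minimality of `(k, d)` forces `ρ ≤ m_k` when `k > 0` and `M_{n-d+1} ≤ ρ` when `d > 0`: otherwise
the level of `(k - 1, d)`, resp. `(k, d - 1)`, a weighted average of `ρ` and that entry, would
satisfy the condition as well. Hence `x_*` is nonincreasing and lies in `S_a`. An `x ∈ S_a` can
drop below `x_*` only on its flat part, and then stays below `x_*` for good; so on every prefix
either `x_* ≤ x` termwise or `x ≤ x_*` termwise on the remaining suffix, and as both sum to `a`
the prefix sums of `x_*` are the smaller ones.
-/

open Finset

noncomputable section

/-- Condition on `(k, d)` in Theorem 6: `k + d < n` and `m_{k+1} ≤ ρ ≤ M_{n-d}` where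
`ρ = (a - ⟨m, s^k⟩ - ⟨M, v^{n-d}⟩)/(n - k - d)`. -/
def MinCond (n : ℕ) (a : ℝ) (m M : Fin n → ℝ) (k d : ℕ) : Prop :=
  k + d < n ∧
    (∀ i : Fin n, (i : ℕ) = k →
      m i ≤ (a - inn m (sv n k) - inn M (vv n (n - d))) / ((n : ℝ) - k - d)) ∧
    (∀ i : Fin n, (i : ℕ) = n - d - 1 →
      (a - inn m (sv n k) - inn M (vv n (n - d))) / ((n : ℝ) - k - d) ≤ M i)

variable {n : ℕ}

section PartialSums

lemma psum_eq_sum_filter (x : Fin n → ℝ) (t : ℕ) :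
    psum x t = ∑ i ∈ univ.filter (fun i : Fin n => (i : ℕ) < t), x i :=
  (sum_filter _ _).symm

/-- On each prefix either `y ≤ x` termwise, or `x ≤ y` on the complementary suffix. -/
lemma psum_le_psum_of_crossing {x y : Fin n → ℝ} (hsum : ∑ i, y i = ∑ i, x i)
    (hcross : ∀ i j, i ≤ j → x i < y i → x j ≤ y j) (t : ℕ) : psum y t ≤ psum x t := by
  rw [psum_eq_sum_filter, psum_eq_sum_filter]
  by_cases hhead : ∀ i : Fin n, (i : ℕ) < t → y i ≤ x i
  · exact sum_le_sum fun i hi => hhead i (mem_filter.1 hi).2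
  · push Not at hhead
    obtain ⟨i, hit, hi⟩ := hhead
    have htail : ∑ j ∈ univ.filter (fun j : Fin n => ¬ (j : ℕ) < t), x j ≤
        ∑ j ∈ univ.filter (fun j : Fin n => ¬ (j : ℕ) < t), y j :=
      sum_le_sum fun j hj => hcross i j (by simp only [mem_filter] at hj; omega) hi
    have hx := sum_filter_add_sum_filter_not univ (fun j : Fin n => (j : ℕ) < t) x
    have hy := sum_filter_add_sum_filter_not univ (fun j : Fin n => (j : ℕ) < t) y
    linarith

end PartialSums

section Plateau

def plateau (m M : Fin n → ℝ) (c : ℝ) (k l : ℕ) : Fin n → ℝ :=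
  fun i => if (i : ℕ) < k then m i else if (i : ℕ) < l then c else M i

variable {m M x : Fin n → ℝ} {c : ℝ} {k l : ℕ}

lemma plateau_antitone (hm : Antitone m) (hM : Antitone M)
    (htop : ∀ i : Fin n, (i : ℕ) < k → c ≤ m i) (hbot : ∀ i : Fin n, l ≤ (i : ℕ) → M i ≤ c) : Antitone (plateau m M c k l) := by
  intro i j hij
  have hij' : (i : ℕ) ≤ j := hij
  simp only [plateau]
  split_ifs <;> first
    | exact hm hij | exact hM hij | exact le_rfl | exact htop i ‹_›
    | exact (hbot j (by omega)).trans (htop i ‹_›) | exact hbot j (by omega) | omega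

lemma plateau_mem_Icc (hmM : ∀ i, m i ≤ M i)
    (hmid : ∀ i : Fin n, k ≤ (i : ℕ) → (i : ℕ) < l → c ∈ Set.Icc (m i) (M i)) (i : Fin n) :
    plateau m M c k l i ∈ Set.Icc (m i) (M i) := by
  simp only [plateau]
  split_ifs with h1 h2
  · exact ⟨le_rfl, hmM i⟩
  · exact hmid i (by omega) h2
  · exact ⟨hmM i, le_rfl⟩

/-- Since `m ≤ x ≤ M`, a crossing can only happen on the flat part, where `x` then stays below `c`. -/
lemma plateau_crossing (hx : Antitone x) (hmx : ∀ i, m i ≤ x i) (hxM : ∀ i, x i ≤ M i)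
    (i j : Fin n) (hij : i ≤ j) (hlt : x i < plateau m M c k l i) :
    x j ≤ plateau m M c k l j := by
  have hij' : (i : ℕ) ≤ j := hij
  simp only [plateau] at hlt ⊢
  split_ifs at hlt ⊢
  all_goals first
    | exact hxM j | exact absurd hlt (not_lt.2 (hmx i)) | omega
    | exact (hx hij).trans hlt.le

lemma had_sv_add_smul_add_had_vv (hkl : k ≤ l) :
    (fun i => had m (sv n k) i + c * (sv n l i - sv n k i) + had M (vv n l) i) =
      plateau m M c k l := by
  funext i
  simp only [had, sv, vv, plateau]
  split_ifs <;> first | omega | ring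

end Plateau

section Level

lemma inn_sv_succ (x : Fin n → ℝ) {t : ℕ} (ht : t < n) :
    inn x (sv n (t + 1)) = inn x (sv n t) + x ⟨t, ht⟩ := by
  have hsv : sv n (t + 1) = sv n t + Pi.single ⟨t, ht⟩ 1 := by
    funext i
    simp only [sv, Pi.add_apply, Pi.single_apply, Fin.ext_iff]
    split_ifs <;> first | omega | norm_num
  change x ⬝ᵥ sv n (t + 1) = x ⬝ᵥ sv n t + x ⟨t, ht⟩
  rw [hsv, dotProduct_add, dotProduct_single, mul_one]

lemma inn_vv_eq_add (x : Fin n → ℝ) {t : ℕ} (ht : t < n) :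
    inn x (vv n t) = x ⟨t, ht⟩ + inn x (vv n (t + 1)) := by
  have hvv : vv n t = Pi.single ⟨t, ht⟩ 1 + vv n (t + 1) := by
    funext i
    simp only [vv, Pi.add_apply, Pi.single_apply, Fin.ext_iff]
    split_ifs <;> first | omega | norm_num
  change x ⬝ᵥ vv n t = x ⟨t, ht⟩ + x ⬝ᵥ vv n (t + 1)
  rw [hvv, dotProduct_add, dotProduct_single, mul_one]

lemma sum_sv {j : ℕ} (hj : j ≤ n) : ∑ i, sv n j i = j := by
  simp [sv, sum_boole, Fin.card_filter_val_lt, hj]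

/-- The paper's `ρ` for the pair `(k, d)`. -/
def fillLevel (n : ℕ) (a : ℝ) (m M : Fin n → ℝ) (k d : ℕ) : ℝ :=
  (a - inn m (sv n k) - inn M (vv n (n - d))) / ((n : ℝ) - k - d)

variable {a : ℝ} {m M : Fin n → ℝ} {k d : ℕ}

lemma minCond_iff : MinCond n a m M k d ↔ k + d < n ∧
    (∀ i : Fin n, (i : ℕ) = k → m i ≤ fillLevel n a m M k d) ∧
    (∀ i : Fin n, (i : ℕ) = n - d - 1 → fillLevel n a m M k d ≤ M i) :=
  Iff.rfl

lemma mul_fillLevel (h : k + d < n) :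
    ((n : ℝ) - k - d) * fillLevel n a m M k d = a - inn m (sv n k) - inn M (vv n (n - d)) := by
  have hpos : (0 : ℝ) < (n : ℝ) - k - d := by
    have : ((k + d : ℕ) : ℝ) < n := by exact_mod_cast h
    push_cast at this
    linarith
  rw [fillLevel, mul_div_cancel₀ _ hpos.ne']

/-- `ρ(k, d)` is a weighted average of `ρ(k + 1, d)` and `m_{k+1}`. -/
lemma MinCond.of_succ_left (h : MinCond n a m M (k + 1) d)
    (hlt : m ⟨k, by have := h.1; omega⟩ < fillLevel n a m M (k + 1) d) :
    MinCond n a m M k d := by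
  obtain ⟨hn, -, hM⟩ := minCond_iff.1 h
  have hk : k < n := by omega
  have hw : (0 : ℝ) < (n : ℝ) - (k + 1 : ℕ) - d := by
    have : ((k + 1 + d : ℕ) : ℝ) < n := by exact_mod_cast hn
    push_cast at this ⊢
    linarith
  have hrel : ((n : ℝ) - k - d) * fillLevel n a m M k d =
      ((n : ℝ) - (k + 1 : ℕ) - d) * fillLevel n a m M (k + 1) d + m ⟨k, hk⟩ := by
    rw [mul_fillLevel (by omega), mul_fillLevel hn, inn_sv_succ m hk]
    ring
  push_cast at hrel hw
  have hlow : m ⟨k, hk⟩ ≤ fillLevel n a m M k d := by nlinarith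
  have hup : fillLevel n a m M k d ≤ fillLevel n a m M (k + 1) d := by nlinarith
  refine minCond_iff.2 ⟨by omega, fun i hi => ?_, fun i hi => hup.trans (hM i hi)⟩
  obtain rfl : i = ⟨k, hk⟩ := Fin.ext hi
  exact hlow

/-- `ρ(k, d)` is a weighted average of `ρ(k, d + 1)` and `M_{n-d}`. -/
lemma MinCond.of_succ_right (h : MinCond n a m M k (d + 1))
    (hlt : fillLevel n a m M k (d + 1) < M ⟨n - d - 1, by have := h.1; omega⟩) :
    MinCond n a m M k d := by
  obtain ⟨hn, hm, -⟩ := minCond_iff.1 h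
  have hd : n - d - 1 < n := by omega
  have hw : (0 : ℝ) < (n : ℝ) - k - (d + 1 : ℕ) := by
    have : ((k + (d + 1) : ℕ) : ℝ) < n := by exact_mod_cast hn
    push_cast at this ⊢
    linarith
  have hrel : ((n : ℝ) - k - d) * fillLevel n a m M k d =
      ((n : ℝ) - k - (d + 1 : ℕ)) * fillLevel n a m M k (d + 1) + M ⟨n - d - 1, hd⟩ := by
    rw [mul_fillLevel (by omega), mul_fillLevel hn, show n - (d + 1) = n - d - 1 by omega,
      inn_vv_eq_add M hd, show n - d - 1 + 1 = n - d by omega]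
    ring
  push_cast at hrel hw
  have hlow : fillLevel n a m M k (d + 1) ≤ fillLevel n a m M k d := by nlinarith
  have hup : fillLevel n a m M k d ≤ M ⟨n - d - 1, hd⟩ := by nlinarith
  refine minCond_iff.2 ⟨by omega, fun i hi => (hm i hi).trans hlow, fun i hi => ?_⟩
  obtain rfl : i = ⟨n - d - 1, hd⟩ := Fin.ext hi
  exact hup

lemma fillLevel_le_of_minimal (hm : Antitone m) (h : MinCond n a m M k d)
    (hmin : ∀ k', MinCond n a m M k' d → k ≤ k') (i : Fin n) (hi : (i : ℕ) < k) :
    fillLevel n a m M k d ≤ m i := by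
  obtain ⟨k, rfl⟩ : ∃ k', k = k' + 1 := ⟨k - 1, by omega⟩
  have hk : k < n := by have := h.1; omega
  calc fillLevel n a m M (k + 1) d ≤ m ⟨k, hk⟩ :=
        not_lt.1 fun hlt => absurd (hmin k (h.of_succ_left hlt)) (by omega)
    _ ≤ m i := hm (Fin.le_def.2 (by simp only; omega))

lemma le_fillLevel_of_minimal (hM : Antitone M) (h : MinCond n a m M k d)
    (hmin : ∀ d', MinCond n a m M k d' → d ≤ d') (i : Fin n) (hi : n - d ≤ (i : ℕ)) :
    M i ≤ fillLevel n a m M k d := by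
  obtain ⟨d, rfl⟩ : ∃ d', d = d' + 1 := ⟨d - 1, by have := i.isLt; omega⟩
  have hd : n - d - 1 < n := by have := h.1; omega
  calc M i ≤ M ⟨n - d - 1, hd⟩ := hM (Fin.le_def.2 (by simp only; omega))
    _ ≤ fillLevel n a m M k (d + 1) :=
        not_lt.1 fun hlt => absurd (hmin d (h.of_succ_right hlt)) (by omega)

lemma MinCond.fillLevel_mem_Icc (hm : Antitone m) (hM : Antitone M) (h : MinCond n a m M k d)
    (i : Fin n) (hki : k ≤ (i : ℕ)) (hil : (i : ℕ) < n - d) :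
    fillLevel n a m M k d ∈ Set.Icc (m i) (M i) := by
  obtain ⟨hn, hmk, hMd⟩ := minCond_iff.1 h
  exact ⟨(hm (Fin.le_def.2 hki : (⟨k, by omega⟩ : Fin n) ≤ i)).trans (hmk _ rfl),
    (hMd _ rfl).trans (hM (Fin.le_def.2 (by simp only; omega) : i ≤ ⟨n - d - 1, by omega⟩))⟩

lemma MinCond.sum_eq (h : MinCond n a m M k d) :
    ∑ i, (had m (sv n k) i + fillLevel n a m M k d * (sv n (n - d) i - sv n k i) +
      had M (vv n (n - d)) i) = a := by
  have hn := h.1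
  simp only [sum_add_distrib, ← mul_sum, sum_sub_distrib, sum_sv (show n - d ≤ n by omega),
    sum_sv (show k ≤ n by omega)]
  change inn m (sv n k) + _ + inn M (vv n (n - d)) = a
  have := mul_fillLevel (a := a) (m := m) (M := M) hn
  rw [Nat.cast_sub (by omega)]
  linear_combination this

end Level

theorem minimal_element_of_Sa_general (n : ℕ) (a : ℝ) (m M : Fin n → ℝ)
    (hm_dec : ∀ i j : Fin n, i ≤ j → m j ≤ m i)
    (hM_dec : ∀ i j : Fin n, i ≤ j → M j ≤ M i)
    (hmM : ∀ i, 0 ≤ m i ∧ m i ≤ M i)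
    (k d : ℕ) (hkd : MinCond n a m M k d)
    (hkdmin : ∀ k' d' : ℕ, MinCond n a m M k' d' → k ≤ k' ∧ d ≤ d')
    (ρ : ℝ) (hρ : ρ = (a - inn m (sv n k) - inn M (vv n (n - d))) / ((n : ℝ) - k - d))
    (xmin : Fin n → ℝ)
    (hxmin : xmin = fun i =>
      had m (sv n k) i + ρ * (sv n (n - d) i - sv n k i) + had M (vv n (n - d)) i)
    (Sa : Set (Fin n → ℝ))
    (hSa : Sa = SigmaSet n a ∩ {x | ∀ i, m i ≤ x i ∧ x i ≤ M i}) :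
    xmin ∈ Sa ∧ ∀ x ∈ Sa, Maj xmin x := by
  have hm : Antitone m := fun i j hij => hm_dec i j hij
  have hM : Antitone M := fun i j hij => hM_dec i j hij
  replace hρ : ρ = fillLevel n a m M k d := hρ
  subst hρ hSa
  have hsum : ∑ i, xmin i = a := hxmin ▸ hkd.sum_eq
  rw [had_sv_add_smul_add_had_vv (by have := hkd.1; omega)] at hxmin
  subst hxmin
  have hanti : Antitone (plateau m M (fillLevel n a m M k d) k (n - d)) :=
    plateau_antitone hm hM (fillLevel_le_of_minimal hm hkd fun k' h => (hkdmin k' d h).1)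
      (le_fillLevel_of_minimal hM hkd fun d' h => (hkdmin k d' h).2)
  have hbounds := plateau_mem_Icc (fun i => (hmM i).2) (hkd.fillLevel_mem_Icc hm hM)
  refine ⟨⟨⟨fun i j hij => hanti hij, fun i => (hmM i).1.trans (hbounds i).1, hsum⟩, hbounds⟩, ?_⟩
  rintro x ⟨⟨hx, -, hxsum⟩, hxmM⟩
  have hcross := plateau_crossing (c := fillLevel n a m M k d) (k := k) (l := n - d)
    (fun i j hij => hx i j hij) (fun i => (hxmM i).1) (fun i => (hxmM i).2)
  exact ⟨fun t _ _ => psum_le_psum_of_crossing (hsum.trans hxsum.symm) hcross t,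
    hsum.trans hxsum.symm⟩

/-- The vector `x_* = m∘s^k + ρ(s^{n-d} - s^k) + M∘v^{n-d}` belongs to `S_a` and is
majorized by every element of `S_a`. -/
theorem minimal_element_of_Sa (n : ℕ) (a : ℝ) (ha : 0 < a) (m M : Fin n → ℝ)
    (hm_dec : ∀ i j : Fin n, i ≤ j → m j ≤ m i)
    (hM_dec : ∀ i j : Fin n, i ≤ j → M j ≤ M i)
    (hmM : ∀ i, 0 ≤ m i ∧ m i ≤ M i)
    (hma : inn m (sv n n) ≤ a) (haM : a ≤ inn M (sv n n))
    (k d : ℕ) (hkd : MinCond n a m M k d)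
    (hkdmin : ∀ k' d' : ℕ, MinCond n a m M k' d' → k ≤ k' ∧ d ≤ d')
    (ρ : ℝ) (hρ : ρ = (a - inn m (sv n k) - inn M (vv n (n - d))) / ((n : ℝ) - k - d))
    (xmin : Fin n → ℝ)
    (hxmin : xmin = fun i =>
      had m (sv n k) i + ρ * (sv n (n - d) i - sv n k i) + had M (vv n (n - d)) i)
    (Sa : Set (Fin n → ℝ))
    (hSa : Sa = SigmaSet n a ∩ {x | ∀ i, m i ≤ x i ∧ x i ≤ M i}) :
    xmin ∈ Sa ∧ ∀ x ∈ Sa, Maj xmin x :=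
  minimal_element_of_Sa_general n a m M hm_dec hM_dec hmM k d hkd hkdmin ρ hρ xmin hxmin Sa hSa
end
end

section
/- Let a > 0, let m = (m_1,...,m_n) and M = (M_1,...,M_n) be vectors arranged in nonincreasing order with 0 ≤ m_i ≤ M_i for all i and ⟨m,s^n⟩ ≤ a ≤ ⟨M,s^n⟩, and assume additionally that the intervals are disjoint: M_{i+1} < m_i for i = 1,...,n−1. Let k ≥ 0 be the smallest integer such that ⟨m, s^{k+1}⟩ + ⟨M, v^{k+1}⟩ ≤ a < ⟨m, s^k⟩ + ⟨M, v^k⟩, and set ρ = a − ⟨m, s^k⟩ − ⟨M, v^{k+1}⟩. Then the minimal element of S_a with respect to the majorization order is x_*(S_a) = m∘s^k + ρ e^{k+1} + M∘v^{k+1}. -/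
open Finset

noncomputable section

/-! The candidate takes the lower bounds `m i` before the pivot index `k`, the upper bounds `M i`
after it, and the pivot entry `ρ ∈ [m k, M k]` absorbs the remaining mass; disjointness of the
intervals makes it nonincreasing. Every `x ∈ S_a` has larger partial sums up to `k` (as
`m i ≤ x i`) and smaller tails after `k` (as `x i ≤ M i`), which with equal totals is
majorization. -/

def pivotVec {n : ℕ} (m : Fin n → ℝ) (ρ : ℝ) (M : Fin n → ℝ) (k : Fin n) : Fin n → ℝ :=
  fun i => if i < k then m i else if i = k then ρ else M i

section

variable {n : ℕ}

theorem sv_succ (n k : ℕ) : sv n (k + 1) = sv n k + ev n (k + 1) := by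
  ext i
  simp only [sv, ev, Pi.add_apply]
  split_ifs <;> first | omega | norm_num

theorem vv_eq_vv_succ_add_ev (n k : ℕ) : vv n k = vv n (k + 1) + ev n (k + 1) := by
  ext i
  simp only [vv, ev, Pi.add_apply]
  split_ifs <;> first | omega | norm_num

theorem ev_eq_zero_of_le {k : ℕ} (h : n ≤ k) : ev n (k + 1) = 0 := by
  ext i
  simp only [ev, Pi.zero_apply, ite_eq_right_iff]
  omega

theorem sum_ev (k : Fin n) : ∑ i, ev n (k + 1) i = 1 := by
  simp [ev, Fin.val_inj]

theorem inn_add_right (x u v : Fin n → ℝ) : inn x (u + v) = inn x u + inn x v := by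
  simp only [inn, Pi.add_apply, mul_add, sum_add_distrib]

theorem inn_zero_right (x : Fin n → ℝ) : inn x 0 = 0 := by
  simp [inn]

theorem inn_ev (x : Fin n → ℝ) (k : Fin n) : inn x (ev n (k + 1)) = x k := by
  simp [inn, ev, Fin.val_inj]

theorem sum_had_add_mul_ev_add_had (m M : Fin n → ℝ) (ρ : ℝ) (k : Fin n) :
    ∑ i, (had m (sv n k) i + ρ * ev n (k + 1) i + had M (vv n (k + 1)) i) =
      inn m (sv n k) + ρ + inn M (vv n (k + 1)) := by
  simp only [sum_add_distrib, ← mul_sum, sum_ev, mul_one, had, inn]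

theorem had_add_mul_ev_add_had_eq_pivotVec (m M : Fin n → ℝ) (ρ : ℝ) (k : Fin n) :
    (fun i => had m (sv n k) i + ρ * ev n (k + 1) i + had M (vv n (k + 1)) i) =
      pivotVec m ρ M k := by
  ext i
  simp only [had, sv, ev, vv, pivotVec, Fin.lt_def, Fin.ext_iff]
  split_ifs <;> first | omega | simp

theorem Maj.of_le_of_ge {x y : Fin n → ℝ} (k : Fin n) (hpre : ∀ i, i < k → y i ≤ x i)
    (hsuf : ∀ i, k < i → x i ≤ y i) (hsum : ∑ i, y i = ∑ i, x i) : Maj y x := by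
  -- partial sums up to `k` compare termwise, longer ones through their complementary tails
  refine ⟨fun t _ _ => ?_, hsum⟩
  rcases le_or_gt t k with htk | htk
  · refine sum_le_sum fun i _ => ?_
    split_ifs with hit
    exacts [hpre i (Fin.lt_def.2 (by omega)), le_rfl]
  · have psum_eq : ∀ z : Fin n → ℝ,
        psum z t = ∑ i, z i - ∑ i : Fin n, if (i : ℕ) < t then 0 else z i := fun z => by
      rw [eq_sub_iff_add_eq, psum, ← sum_add_distrib]
      exact sum_congr rfl fun i _ => by split_ifs <;> simp
    rw [psum_eq, psum_eq, hsum]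
    gcongr with i
    split_ifs with hit
    exacts [le_rfl, hsuf i (Fin.lt_def.2 (by omega))]

theorem lt_of_lt_of_disjoint {m M : Fin n → ℝ} (hm : Antitone m)
    (hdisj : ∀ i j : Fin n, (j : ℕ) = i + 1 → M j < m i) {i j : Fin n} (hij : i < j) :
    M j < m i :=
  (hdisj ⟨j - 1, by omega⟩ j (by simp; omega)).trans_le
    (hm (Fin.le_def.2 (by rw [Fin.lt_def] at hij; simp only; omega)))

section pivotVec

variable {m M : Fin n → ℝ} {ρ : ℝ} {k : Fin n}

theorem pivotVec_of_lt {i : Fin n} (hi : i < k) : pivotVec m ρ M k i = m i := if_pos hi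

theorem pivotVec_self : pivotVec m ρ M k k = ρ := by simp [pivotVec]

theorem pivotVec_of_gt {i : Fin n} (hi : k < i) : pivotVec m ρ M k i = M i := by
  simp [pivotVec, hi.not_gt, hi.ne']

theorem pivotVec_antitone (hm : Antitone m) (hM : Antitone M) (hρm : ∀ i, i < k → ρ ≤ m i)
    (hMρ : ∀ j, k < j → M j ≤ ρ) : Antitone (pivotVec m ρ M k) := by
  intro i j hij
  rcases lt_trichotomy j k with hj | rfl | hj
  · rw [pivotVec_of_lt hj, pivotVec_of_lt (hij.trans_lt hj)]
    exact hm hij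
  · rcases hij.lt_or_eq with hi | rfl
    · rw [pivotVec_self, pivotVec_of_lt hi]
      exact hρm i hi
    · rfl
  · rw [pivotVec_of_gt hj]
    rcases lt_trichotomy i k with hi | rfl | hi
    · rw [pivotVec_of_lt hi]
      exact (hMρ j hj).trans (hρm i hi)
    · rw [pivotVec_self]
      exact hMρ j hj
    · rw [pivotVec_of_gt hi]
      exact hM hij

theorem pivotVec_mem_Icc (hmM : ∀ i, m i ≤ M i) (hρ : m k ≤ ρ ∧ ρ ≤ M k) (i : Fin n) :
    pivotVec m ρ M k i ∈ Set.Icc (m i) (M i) := by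
  rcases lt_trichotomy i k with hi | rfl | hi
  · rw [pivotVec_of_lt hi]; exact ⟨le_rfl, hmM i⟩
  · rw [pivotVec_self]; exact hρ
  · rw [pivotVec_of_gt hi]; exact ⟨hmM i, le_rfl⟩

end pivotVec

end

theorem minimal_element_of_Sa_disjoint_general (n : ℕ) (a : ℝ) (m M : Fin n → ℝ)
    (hm_dec : ∀ i j : Fin n, i ≤ j → m j ≤ m i)
    (hM_dec : ∀ i j : Fin n, i ≤ j → M j ≤ M i)
    (hmM : ∀ i, 0 ≤ m i ∧ m i ≤ M i)
    (hdisj : ∀ i j : Fin n, (j : ℕ) = (i : ℕ) + 1 → M j < m i)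
    (k : ℕ)
    (hk : inn m (sv n (k + 1)) + inn M (vv n (k + 1)) ≤ a ∧
          a < inn m (sv n k) + inn M (vv n k))
    (ρ : ℝ) (hρ : ρ = a - inn m (sv n k) - inn M (vv n (k + 1)))
    (xmin : Fin n → ℝ)
    (hxmin : xmin = fun i => had m (sv n k) i + ρ * ev n (k + 1) i + had M (vv n (k + 1)) i)
    (Sa : Set (Fin n → ℝ))
    (hSa : Sa = SigmaSet n a ∩ {x | ∀ i, m i ≤ x i ∧ x i ≤ M i}) :
    xmin ∈ Sa ∧ ∀ x ∈ Sa, Maj xmin x := by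
  rw [sv_succ, vv_eq_vv_succ_add_ev n k, inn_add_right, inn_add_right] at hk
  have hρm : inn m (ev n (k + 1)) ≤ ρ := by linarith [hk.1]
  have hρM : ρ < inn M (ev n (k + 1)) := by linarith [hk.2]
  obtain ⟨k, rfl⟩ : ∃ k' : Fin n, (k' : ℕ) = k := by
    refine ⟨⟨k, ?_⟩, rfl⟩
    by_contra! hnk
    simp only [ev_eq_zero_of_le hnk, inn_zero_right] at hρm hρM
    linarith
  rw [inn_ev] at hρm hρM
  have hsum : ∑ i, xmin i = a := by
    rw [hxmin, sum_had_add_mul_ev_add_had, hρ]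
    ring
  rw [had_add_mul_ev_add_had_eq_pivotVec] at hxmin
  subst hxmin hSa
  have hbox := pivotVec_mem_Icc (fun i => (hmM i).2) ⟨hρm, hρM.le⟩
  refine ⟨⟨⟨pivotVec_antitone hm_dec hM_dec ?_ ?_, fun i => (hmM i).1.trans (hbox i).1, hsum⟩,
    hbox⟩, ?_⟩
  · exact fun i hi => (hρM.trans (lt_of_lt_of_disjoint hm_dec hdisj hi)).le
  · exact fun j hj => ((lt_of_lt_of_disjoint hm_dec hdisj hj).trans_le hρm).le
  · rintro x ⟨⟨-, -, hx⟩, hxbox⟩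
    refine Maj.of_le_of_ge k (fun i hi => ?_) (fun i hi => ?_) (hsum.trans hx.symm)
    · exact (pivotVec_of_lt hi).trans_le (hxbox i).1
    · exact (hxbox i).2.trans (pivotVec_of_gt hi).ge

/-- Corollary (disjoint intervals): the minimal element of `S_a` is
`m∘s^k + ρ e^{k+1} + M∘v^{k+1}`. -/
theorem minimal_element_of_Sa_disjoint (n : ℕ) (a : ℝ) (ha : 0 < a) (m M : Fin n → ℝ)
    (hm_dec : ∀ i j : Fin n, i ≤ j → m j ≤ m i)
    (hM_dec : ∀ i j : Fin n, i ≤ j → M j ≤ M i)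
    (hmM : ∀ i, 0 ≤ m i ∧ m i ≤ M i)
    (hma : inn m (sv n n) ≤ a) (haM : a ≤ inn M (sv n n))
    (hdisj : ∀ i j : Fin n, (j : ℕ) = (i : ℕ) + 1 → M j < m i)
    (k : ℕ)
    (hk : inn m (sv n (k + 1)) + inn M (vv n (k + 1)) ≤ a ∧
          a < inn m (sv n k) + inn M (vv n k))
    (hkmin : ∀ j : ℕ,
      (inn m (sv n (j + 1)) + inn M (vv n (j + 1)) ≤ a ∧
        a < inn m (sv n j) + inn M (vv n j)) → k ≤ j)
    (ρ : ℝ) (hρ : ρ = a - inn m (sv n k) - inn M (vv n (k + 1)))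
    (xmin : Fin n → ℝ)
    (hxmin : xmin = fun i => had m (sv n k) i + ρ * ev n (k + 1) i + had M (vv n (k + 1)) i)
    (Sa : Set (Fin n → ℝ))
    (hSa : Sa = SigmaSet n a ∩ {x | ∀ i, m i ≤ x i ∧ x i ≤ M i}) :
    xmin ∈ Sa ∧ ∀ x ∈ Sa, Maj xmin x :=
  minimal_element_of_Sa_disjoint_general n a m M hm_dec hM_dec hmM hdisj k hk ρ hρ xmin hxmin Sa hSa
end
end

section
/- Let 1 ≤ h ≤ n, 0 ≤ m_2 ≤ m_1, 0 ≤ M_2 ≤ M_1, m_i < M_i for i = 1,2, and h·m_1 + (n−h)·m_2 ≤ a ≤ h·M_1 + (n−h)·M_2. Set ã = h·m_1 + (n−h)·M_2. If a < m_1·n and a ≤ ã, then the minimal element of S_a^[h] with respect to the majorization order is x_*(S_a^[h]) = m_1 s^h + ρ v^h with ρ = (a − h·m_1)/(n − h), i.e. the vector whose first h components equal m_1 and whose last n−h components equal ρ. -/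
open Finset

noncomputable section

/-!
With `d = x - x_*`, the entries `d i` are nonnegative for `i < h`, and nonincreasing for `i ≥ h`
because `x_*` is constant there; moreover `∑ d = 0`. Partial sums of `d` up to `k ≤ h` are then
trivially nonnegative. For `k > h`, the mean of `d` over `[k, n)` is at most its mean over
`[h, n)`, and `∑_{i ≥ h} d i = -∑_{i < h} d i ≤ 0`, so `∑_{i ≥ k} d i ≤ 0`, which is the
nonnegativity of the `k`-th partial sum. The hypotheses `h m₁ + (n - h) m₂ ≤ a < n m₁` and
`a ≤ ã` give `m₂ ≤ ρ ≤ min m₁ M₂`, so `x_*` lies in `S_a^[h]`.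
-/
theorem Finset.card_mul_sum_le_card_mul_sum {ι R : Type*} [CommSemiring R] [PartialOrder R]
    [IsOrderedRing R] {s t : Finset ι} {f : ι → R} (hst : ∀ i ∈ s, ∀ j ∈ t, f j ≤ f i) :
    (#s : R) * ∑ j ∈ t, f j ≤ (#t : R) * ∑ i ∈ s, f i := by
  calc (#s : R) * ∑ j ∈ t, f j = ∑ _i ∈ s, ∑ j ∈ t, f j := by
        rw [sum_const, nsmul_eq_mul]
    _ ≤ ∑ i ∈ s, ∑ _j ∈ t, f i := sum_le_sum fun i hi => sum_le_sum fun j hj => hst i hi j hj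
    _ = (#t : R) * ∑ i ∈ s, f i := by simp only [sum_const, nsmul_eq_mul, mul_sum]

theorem Finset.sum_nonpos_of_le_of_sum_union_nonpos {ι R : Type*} [DecidableEq ι] [Field R]
    [LinearOrder R] [IsStrictOrderedRing R] {s t : Finset ι} {f : ι → R} (hdisj : Disjoint s t)
    (hst : ∀ i ∈ s, ∀ j ∈ t, f j ≤ f i) (hsum : ∑ i ∈ s ∪ t, f i ≤ 0) : ∑ j ∈ t, f j ≤ 0 := by
  rw [sum_union hdisj] at hsum
  rcases t.eq_empty_or_nonempty with rfl | ht
  · simp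
  have hcard : (0 : R) < #s + #t := by have := ht.card_pos; positivity
  refine nonpos_of_mul_nonpos_right ?_ hcard
  calc ((#s : R) + #t) * ∑ j ∈ t, f j = #s * ∑ j ∈ t, f j + #t * ∑ j ∈ t, f j := add_mul _ _ _
    _ ≤ #t * ∑ i ∈ s, f i + #t * ∑ j ∈ t, f j :=
        add_le_add_left (card_mul_sum_le_card_mul_sum hst) _
    _ = #t * (∑ i ∈ s, f i + ∑ j ∈ t, f j) := (mul_add _ _ _).symm
    _ ≤ 0 := mul_nonpos_of_nonneg_of_nonpos (Nat.cast_nonneg _) hsum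

theorem psum_sub {n : ℕ} (x y : Fin n → ℝ) (k : ℕ) : psum (x - y) k = psum x k - psum y k := by
  simp only [psum, ← sum_sub_distrib]
  refine sum_congr rfl fun i _ => ?_
  split_ifs <;> simp

theorem psum_nonneg_of_sum_eq_zero {n h : ℕ} {d : Fin n → ℝ} (hsum : ∑ i, d i = 0)
    (hhead : ∀ i : Fin n, (i : ℕ) < h → 0 ≤ d i) (htail : AntitoneOn d {i | h ≤ (i : ℕ)})
    (k : ℕ) : 0 ≤ psum d k := by
  rw [psum, ← sum_filter]
  rcases le_or_gt k h with hkh | hhk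
  · exact sum_nonneg fun i hi => hhead i (by simp at hi; omega)
  set s : Finset (Fin n) := {i | h ≤ (i : ℕ) ∧ (i : ℕ) < k}
  set t : Finset (Fin n) := {i | k ≤ (i : ℕ)}
  have hunion : s ∪ t = ({i | h ≤ (i : ℕ)} : Finset (Fin n)) := by ext i; simp [s, t]; omega
  have htail_sum : ∑ j ∈ t, d j ≤ 0 := by
    refine sum_nonpos_of_le_of_sum_union_nonpos (s := s) ?_ ?_ ?_
    · exact disjoint_filter.2 fun i _ hi => by omega
    · intro i hi j hj
      simp only [s, t, mem_filter, mem_univ, true_and] at hi hj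
      exact htail (show h ≤ (i : ℕ) from hi.1) (show h ≤ (j : ℕ) by omega)
        (Fin.le_def.2 (by omega))
    · have hhead_sum : 0 ≤ ∑ i ∈ ({i | (i : ℕ) < h} : Finset (Fin n)), d i :=
        sum_nonneg fun i hi => hhead i (by simpa using hi)
      have := sum_filter_add_sum_filter_not univ (fun i : Fin n => (i : ℕ) < h) d
      simp only [not_lt] at this
      rw [hunion]
      linarith
  have := sum_filter_add_sum_filter_not univ (fun i : Fin n => (i : ℕ) < k) d
  simp only [not_lt] at this
  linarith

theorem Maj_of_le_of_eq_const_tail {n h : ℕ} {x y : Fin n → ℝ} {r : ℝ} (hx : Antitone x)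
    (hhead : ∀ i : Fin n, (i : ℕ) < h → y i ≤ x i) (htail : ∀ i : Fin n, h ≤ (i : ℕ) → y i = r)
    (hsum : ∑ i, y i = ∑ i, x i) : Maj y x := by
  refine ⟨fun k _ _ => ?_, hsum⟩
  have hd := psum_nonneg_of_sum_eq_zero (d := x - y) (h := h)
    (by simp [sum_sub_distrib, hsum]) (fun i hi => sub_nonneg.2 (hhead i hi))
    (fun i hi j hj hij => by simp only [Pi.sub_apply, htail i hi, htail j hj]; linarith [hx hij])
    k
  rw [psum_sub] at hd
  linarith

theorem mul_sv_add_mul_vv_apply {n h : ℕ} (c r : ℝ) (i : Fin n) :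
    c * sv n h i + r * vv n h i = if (i : ℕ) < h then c else r := by
  simp only [sv, vv]; split_ifs <;> ring

theorem sum_ite_val_lt {n h : ℕ} (hhn : h ≤ n) (c r : ℝ) :
    ∑ i : Fin n, (if (i : ℕ) < h then c else r) = h * c + (n - h : ℝ) * r := by
  have e : ∀ i : Fin n, (if (i : ℕ) < h then c else r) = r + if (i : ℕ) < h then c - r else 0 := by
    intro i; split_ifs <;> ring
  simp only [e, sum_add_distrib, ← sum_filter, sum_const, card_univ, Fintype.card_fin,
    Fin.card_filter_val_lt, min_eq_right hhn, nsmul_eq_mul]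
  ring

theorem mul_sv_add_mul_vv_mem_Sh {n h : ℕ} (hhn : h ≤ n) {a M1 M2 m1 m2 c r : ℝ} (hr : 0 ≤ r)
    (hrc : r ≤ c) (hc : m1 ≤ c ∧ c ≤ M1) (hr' : m2 ≤ r ∧ r ≤ M2)
    (hsum : h * c + (n - h : ℝ) * r = a) :
    (fun i => c * sv n h i + r * vv n h i) ∈ Sh n h a M1 M2 m1 m2 := by
  simp only [Sh, SigmaSet, Set.mem_inter_iff, Set.mem_ofPred_eq, mul_sv_add_mul_vv_apply]
  refine ⟨⟨fun i j hij => ?_, fun i => ?_, by rw [sum_ite_val_lt hhn, hsum]⟩,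
    fun i hi => by rwa [if_pos hi], fun i hi => by rwa [if_neg (by omega)]⟩
  · have : (i : ℕ) ≤ j := hij
    split_ifs <;> first | rfl | linarith
  · split_ifs <;> linarith

theorem minimal_element_of_Sh_low_general (n h : ℕ) (hhn : h ≤ n)
    (a m1 m2 M1 M2 : ℝ)
    (hm2 : 0 ≤ m2)
    (hmM1 : m1 < M1)
    (halow : h * m1 + (n - h : ℝ) * m2 ≤ a)
    (atilde : ℝ) (hatilde : atilde = h * m1 + (n - h : ℝ) * M2)
    (hcase1 : a < m1 * n) (hcase2 : a ≤ atilde)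
    (ρ : ℝ) (hρ : ρ = (a - h * m1) / ((n : ℝ) - h))
    (xmin : Fin n → ℝ)
    (hxmin : xmin = fun i => m1 * sv n h i + ρ * vv n h i) :
    xmin ∈ Sh n h a M1 M2 m1 m2 ∧ ∀ x ∈ Sh n h a M1 M2 m1 m2, Maj xmin x := by
  have hnh : (0 : ℝ) < n - h := by
    by_contra! hle
    have hn : (n : ℝ) = h := le_antisymm (by linarith) (Nat.cast_le.2 hhn)
    rw [hn, sub_self, zero_mul] at halow
    rw [hn] at hcase1
    linarith
  have hρ_eq : h * m1 + (n - h : ℝ) * ρ = a := by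
    rw [hρ, mul_div_cancel₀ _ hnh.ne']; ring
  have hm2ρ : m2 ≤ ρ := le_of_mul_le_mul_left (by linarith) hnh
  have hρM2 : ρ ≤ M2 := le_of_mul_le_mul_left (by linarith) hnh
  have hρm1 : ρ ≤ m1 := le_of_mul_le_mul_left (by linarith) hnh
  subst hxmin
  have hmem :=
    mul_sv_add_mul_vv_mem_Sh hhn (hm2.trans hm2ρ) hρm1 ⟨le_rfl, hmM1.le⟩ ⟨hm2ρ, hρM2⟩ hρ_eq
  refine ⟨hmem, fun x ⟨⟨hx, _, hxsum⟩, hxhead, _⟩ => ?_⟩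
  obtain ⟨-, -, hsum⟩ := hmem.1
  exact Maj_of_le_of_eq_const_tail (r := ρ) (fun i j hij => hx i j hij)
    (fun i hi => by rw [mul_sv_add_mul_vv_apply, if_pos hi]; exact (hxhead i hi).1)
    (fun i hi => by rw [mul_sv_add_mul_vv_apply, if_neg (by omega)]) (hsum.trans hxsum.symm)

/-- Minimal element of `S_a^[h]` when `a < m₁ n` and `a ≤ ã`:
`m₁ s^h + ρ v^h` with `ρ = (a - h m₁)/(n - h)`. -/
theorem minimal_element_of_Sh_low (n h : ℕ) (hh : 1 ≤ h) (hhn : h ≤ n)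
    (a m1 m2 M1 M2 : ℝ) (ha : 0 < a)
    (hm2 : 0 ≤ m2) (hm21 : m2 ≤ m1) (hM2 : 0 ≤ M2) (hM21 : M2 ≤ M1)
    (hmM1 : m1 < M1) (hmM2 : m2 < M2)
    (halow : h * m1 + (n - h : ℝ) * m2 ≤ a) (haup : a ≤ h * M1 + (n - h : ℝ) * M2)
    (atilde : ℝ) (hatilde : atilde = h * m1 + (n - h : ℝ) * M2)
    (hcase1 : a < m1 * n) (hcase2 : a ≤ atilde)
    (ρ : ℝ) (hρ : ρ = (a - h * m1) / ((n : ℝ) - h))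
    (xmin : Fin n → ℝ)
    (hxmin : xmin = fun i => m1 * sv n h i + ρ * vv n h i) :
    xmin ∈ Sh n h a M1 M2 m1 m2 ∧ ∀ x ∈ Sh n h a M1 M2 m1 m2, Maj xmin x :=
  minimal_element_of_Sh_low_general n h hhn a m1 m2 M1 M2 hm2 hmM1 halow atilde hatilde hcase1
    hcase2 ρ hρ xmin hxmin
end
end

section
/- Let 1 ≤ h ≤ n and 0 < α ≤ a/h, and consider S_a^2 = Σ_a ∩ {x ∈ ℝ^n : x_i ≥ α for i = 1,...,h}. If α ≤ a/n, the minimal element of S_a^2 with respect to the majorization order is (a/n) s^n. If α > a/n (so h < n), the minimal element is α s^h + ρ v^h with ρ = (a − αh)/(n − h). -/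
/-!
A nonincreasing vector has decreasing running averages: for `m ≤ k ≤ n`, the mean of `x` over
`[m, k)` is at least its mean over `[m, n)`. With `m = 0` this gives `psum x k ≥ k a / n`, the
partial sums of `(a/n) s^n`. When `α > a/n`, the constraint gives `psum x k ≥ k α` for `k ≤ h`, and
for `k ≥ h` the same averaging over `[h, n)` bounds `psum x k` below by a convex combination of
`psum x h ≥ h α` and `a`, namely `h α + (k - h) ρ`, the partial sum of `α s^h + ρ v^h`.
-/

open Finset

noncomputable section

theorem Finset.card_nsmul_sum_le_card_nsmul_sum {ι M : Type*} [AddCommMonoid M] [PartialOrder M]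
    [IsOrderedAddMonoid M] {s t : Finset ι} {f : ι → M} (hf : ∀ i ∈ s, ∀ j ∈ t, f j ≤ f i) :
    #s • ∑ j ∈ t, f j ≤ #t • ∑ i ∈ s, f i :=
  calc #s • ∑ j ∈ t, f j = ∑ _i ∈ s, ∑ j ∈ t, f j := by rw [sum_const]
    _ ≤ ∑ i ∈ s, ∑ _j ∈ t, f i := sum_le_sum fun i hi => sum_le_sum fun j hj => hf i hi j hj
    _ = #t • ∑ i ∈ s, f i := by simp only [sum_const, sum_nsmul]

theorem AntitoneOn.sub_mul_sum_Ico_le {y : ℕ → ℝ} {m k n : ℕ} (hy : AntitoneOn y (Set.Iio n))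
    (hmk : m ≤ k) (hkn : k ≤ n) :
    ((k : ℝ) - m) * ∑ i ∈ Ico m n, y i ≤ ((n : ℝ) - m) * ∑ i ∈ Ico m k, y i := by
  have hsplit := sum_Ico_consecutive y hmk hkn
  have hcmp := card_nsmul_sum_le_card_nsmul_sum (s := Ico m k) (t := Ico k n) (f := y)
    fun i hi j hj => by
      simp only [mem_Ico] at hi hj
      exact hy (by simpa using hi.2.trans_le hkn) (by simpa using hj.2) (hi.2.le.trans hj.1)
  simp only [nsmul_eq_mul, Nat.card_Ico, Nat.cast_sub hmk, Nat.cast_sub hkn] at hcmp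
  rw [← hsplit]
  nlinarith

theorem psum_eq_sum_range {n k : ℕ} {x : Fin n → ℝ} {y : ℕ → ℝ} (hxy : ∀ i : Fin n, x i = y i)
    (hk : k ≤ n) : psum x k = ∑ i ∈ range k, y i := by
  unfold psum
  simp_rw [hxy]
  rw [Fin.sum_univ_eq_sum_range (fun i => if i < k then y i else 0), ← sum_filter]
  congr 1
  ext i
  simp only [mem_filter, mem_range]
  omega

theorem psum_zero {n : ℕ} (x : Fin n → ℝ) : psum x 0 = 0 := by
  simp [psum]

theorem psum_const {n k : ℕ} (c : ℝ) (hk : k ≤ n) : psum (fun _ : Fin n => c) k = k * c := by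
  simp [psum_eq_sum_range (y := fun _ => c) (fun _ => rfl) hk]

theorem psum_self {n : ℕ} (x : Fin n → ℝ) : psum x n = ∑ i, x i :=
  sum_congr rfl fun i _ => if_pos i.is_lt

theorem psum_le_psum {n k : ℕ} {x y : Fin n → ℝ} (hxy : ∀ i : Fin n, (i : ℕ) < k → x i ≤ y i) :
    psum x k ≤ psum y k :=
  sum_le_sum fun i _ => by split_ifs with hi <;> simp [hxy i, hi]

theorem Antitone.sub_mul_sum_sub_psum_le {n m k : ℕ} {x : Fin n → ℝ} (hx : Antitone x)
    (hmk : m ≤ k) (hkn : k ≤ n) :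
    ((k : ℝ) - m) * (∑ i, x i - psum x m) ≤ ((n : ℝ) - m) * (psum x k - psum x m) := by
  set y : ℕ → ℝ := Function.extend Fin.val x 0
  have hxy : ∀ i : Fin n, x i = y i := fun i => (Fin.val_injective.extend_apply x 0 i).symm
  have hy : AntitoneOn y (Set.Iio n) := fun i hi j hj hij => by
    simp only [Set.mem_Iio] at hi hj
    rw [← hxy ⟨i, hi⟩, ← hxy ⟨j, hj⟩]
    exact hx hij
  have hsum : ∑ i, x i = ∑ i ∈ range n, y i := by
    simp only [hxy]
    exact Fin.sum_univ_eq_sum_range y n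
  rw [hsum, psum_eq_sum_range hxy (hmk.trans hkn), psum_eq_sum_range hxy hkn,
    ← sum_Ico_eq_sub y (hmk.trans hkn), ← sum_Ico_eq_sub y hmk]
  exact hy.sub_mul_sum_Ico_le hmk hkn

section

variable {n h : ℕ} {a α ρ : ℝ}

theorem const_mem_SigmaSet (hn : 0 < n) (ha : 0 ≤ a) : (fun _ : Fin n => a / n) ∈ SigmaSet n a := by
  refine ⟨fun _ _ _ => le_rfl, fun _ => by positivity, ?_⟩
  simp [mul_div_cancel₀ a (Nat.cast_ne_zero.mpr hn.ne')]

theorem maj_const_of_mem_SigmaSet {x : Fin n → ℝ} (hn : 0 < n) (hx : x ∈ SigmaSet n a) :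
    Maj (fun _ => a / n) x := by
  obtain ⟨hmono, -, hsum⟩ := hx
  have hnR : (0 : ℝ) < n := by exact_mod_cast hn
  refine ⟨fun k _ hk => ?_, by simp [hsum, mul_div_cancel₀ a hnR.ne']⟩
  have hkn : k ≤ n := hk.trans (n.sub_le 1)
  have := Antitone.sub_mul_sum_sub_psum_le hmono (Nat.zero_le k) hkn
  simp only [psum_zero, hsum, Nat.cast_zero, sub_zero] at this
  rw [psum_const _ hkn, mul_div_assoc', div_le_iff₀ hnR]
  linarith

theorem mul_sv_add_mul_vv_eq_ite (i : Fin n) :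
    α * sv n h i + ρ * vv n h i = if (i : ℕ) < h then α else ρ := by
  unfold sv vv
  split_ifs <;> ring

theorem psum_mul_sv_add_mul_vv_of_le {k : ℕ} (hkh : k ≤ h) (hhn : h ≤ n) :
    psum (fun i : Fin n => α * sv n h i + ρ * vv n h i) k = k * α := by
  rw [psum_eq_sum_range (y := fun m => if m < h then α else ρ) mul_sv_add_mul_vv_eq_ite
      (hkh.trans hhn), sum_congr rfl fun i hi => if_pos ((mem_range.mp hi).trans_le hkh)]
  simp

theorem psum_mul_sv_add_mul_vv_of_ge {k : ℕ} (hhk : h ≤ k) (hkn : k ≤ n) :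
    psum (fun i : Fin n => α * sv n h i + ρ * vv n h i) k = h * α + (k - h) * ρ := by
  rw [psum_eq_sum_range (y := fun m => if m < h then α else ρ) mul_sv_add_mul_vv_eq_ite hkn,
    ← sum_range_add_sum_Ico _ hhk, sum_congr rfl fun i hi => if_pos (mem_range.mp hi),
    sum_congr rfl fun i hi => if_neg (mem_Ico.mp hi).1.not_gt]
  simp [Nat.cast_sub hhk]

theorem mul_sv_add_mul_vv_mem_S2 (hhn : h ≤ n) (hρ : 0 ≤ ρ) (hρα : ρ ≤ α)
    (hsum : h * α + (n - h) * ρ = a) :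
    (fun i : Fin n => α * sv n h i + ρ * vv n h i) ∈ S2 n h a α := by
  refine ⟨⟨fun i j hij => ?_, fun i => ?_, ?_⟩, fun i hi => ?_⟩
  · simp only [mul_sv_add_mul_vv_eq_ite]
    split_ifs with hj hi hi
    · exact le_rfl
    · exact absurd ((Fin.le_iff_val_le_val.mp hij).trans_lt hj) hi
    · exact hρα
    · exact le_rfl
  · simp only [mul_sv_add_mul_vv_eq_ite]
    split_ifs <;> linarith
  · rw [← psum_self, psum_mul_sv_add_mul_vv_of_ge hhn le_rfl, hsum]
  · simp only [mul_sv_add_mul_vv_eq_ite, if_pos hi, le_rfl]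

theorem maj_mul_sv_add_mul_vv_of_mem_S2 {x : Fin n → ℝ} (hx : x ∈ S2 n h a α) (hhn : h < n) :
    Maj (fun i : Fin n => α * sv n h i + (a - α * h) / (n - h) * vv n h i) x := by
  obtain ⟨⟨hmono, -, hsum⟩, hbd⟩ := hx
  set ρ := (a - α * h) / (n - h)
  have hnh : (0 : ℝ) < n - h := sub_pos.mpr (by exact_mod_cast hhn)
  have hρ : (n - h) * ρ = a - α * h := mul_div_cancel₀ _ hnh.ne'
  have hle : ∀ k ≤ h, k * α ≤ psum x k := fun k hkh => by
    rw [← psum_const α (hkh.trans hhn.le)]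
    exact psum_le_psum fun i hi => hbd i (hi.trans_le hkh)
  refine ⟨fun k _ hk => ?_, ?_⟩
  · have hkn : k ≤ n := hk.trans (n.sub_le 1)
    rcases le_total k h with hkh | hhk
    · rw [psum_mul_sv_add_mul_vv_of_le hkh hhn.le]
      exact hle k hkh
    · rw [psum_mul_sv_add_mul_vv_of_ge hhk hkn]
      have hkn' : (k : ℝ) ≤ n := by exact_mod_cast hkn
      have havg := Antitone.sub_mul_sum_sub_psum_le hmono hhk hkn
      rw [hsum] at havg
      have hs := mul_le_mul_of_nonneg_left (hle h le_rfl) (sub_nonneg.mpr hkn')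
      refine le_of_mul_le_mul_left ?_ hnh
      nlinarith
  · rw [← psum_self, ← psum_self, psum_mul_sv_add_mul_vv_of_ge hhn.le le_rfl, psum_self, hsum]
    linarith

end

theorem minimal_element_of_S2_general (n h : ℕ) (hh : 1 ≤ h) (hhn : h ≤ n)
    (a α : ℝ) (ha : 0 < a) (hαa : α ≤ a / h) :
    (α ≤ a / n →
      ∀ xmin : Fin n → ℝ, xmin = (fun _ => a / n) →
        xmin ∈ S2 n h a α ∧ ∀ x ∈ S2 n h a α, Maj xmin x) ∧
    (a / n < α →
      ∀ xmin : Fin n → ℝ, xmin = (fun i => α * sv n h i + (a - α * h) / ((n : ℝ) - h) * vv n h i) →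
        xmin ∈ S2 n h a α ∧ ∀ x ∈ S2 n h a α, Maj xmin x) := by
  refine ⟨fun hαn xmin hxmin => ?_, fun hαn xmin hxmin => ?_⟩ <;> subst hxmin
  · have hn : 0 < n := hh.trans hhn
    exact ⟨⟨const_mem_SigmaSet hn ha.le, fun _ _ => hαn⟩,
      fun x hx => maj_const_of_mem_SigmaSet hn hx.1⟩
  · have hhn' : h < n := hhn.lt_of_ne (by rintro rfl; linarith)
    have hnh : (0 : ℝ) < n - h := sub_pos.mpr (by exact_mod_cast hhn')
    have hρ : (n - h) * ((a - α * h) / (n - h)) = a - α * h := mul_div_cancel₀ _ hnh.ne'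
    have hαh : α * h ≤ a := mul_le_of_le_div₀ ha.le h.cast_nonneg hαa
    have hαn' : a < α * n := (div_lt_iff₀ (by linarith [h.cast_nonneg (α := ℝ)])).mp hαn
    refine ⟨mul_sv_add_mul_vv_mem_S2 hhn ?_ ?_ (by linarith),
      fun x hx => maj_mul_sv_add_mul_vv_of_mem_S2 hx hhn'⟩
    · exact div_nonneg (sub_nonneg.mpr hαh) hnh.le
    · rw [div_le_iff₀ hnh]
      linarith

/-- Minimal element of `S_a^2`: `(a/n) s^n` if `α ≤ a/n`, and `α s^h + ρ v^h` with
`ρ = (a - αh)/(n - h)` if `α > a/n`. -/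
theorem minimal_element_of_S2 (n h : ℕ) (hh : 1 ≤ h) (hhn : h ≤ n)
    (a α : ℝ) (ha : 0 < a) (hα : 0 < α) (hαa : α ≤ a / h) :
    (α ≤ a / n →
      ∀ xmin : Fin n → ℝ, xmin = (fun _ => a / n) →
        xmin ∈ S2 n h a α ∧ ∀ x ∈ S2 n h a α, Maj xmin x) ∧
    (a / n < α →
      ∀ xmin : Fin n → ℝ, xmin = (fun i => α * sv n h i + (a - α * h) / ((n : ℝ) - h) * vv n h i) →
        xmin ∈ S2 n h a α ∧ ∀ x ∈ S2 n h a α, Maj xmin x) :=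
  minimal_element_of_S2_general n h hh hhn a α ha hαa
end
end

section
/- Let G = (V,E) be a simple, connected, undirected graph with n ≥ 4 vertices, m edges, exactly h ≥ 1 pendant vertices with n − h ≥ 2, and nonincreasing degree sequence d_1 ≥ ... ≥ d_{n−h} ≥ 2 > d_{n−h+1} = ... = d_n = 1, satisfying 1 + d_1 ≤ d_{n−h} + d_{n−h−1}. Set m_1 = d_{n−h} + d_{n−h−1}, m_2 = 1 + d_{n−h}, M_1 = d_1 + d_2, M_2 = 1 + d_1, a = Σ_{i=1}^n d_i^2, and let x*(S_a^{m−h}) and x_*(S_a^{m−h}) denote the maximal and minimal elements with respect to the majorization order of S_a^{m−h} ⊂ ℝ^m. Then ( ‖x_*(S_a^{m−h})‖_2^2 − Σ_{i=1}^n d_i^3 ) / 2 ≤ S(G) ≤ ( ‖x*(S_a^{m−h})‖_2^2 − Σ_{i=1}^n d_i^3 ) / 2, where ‖·‖_2 is the Euclidean norm. -/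
/-!
List the `q` edge values `dᵢ + dⱼ`, the `q - h` edges between non-pendant vertices first and the
`h` pendant edges last, each block in nonincreasing order. In a connected graph on at least three
vertices no two pendant vertices are adjacent, so each pendant vertex lies on exactly one edge and
the other end of that edge is non-pendant. As the degrees are sorted, an inner edge has value in
`[m₁, M₁]` and a pendant edge in `[m₂, M₂]`, and `M₂ ≤ m₁` makes the whole list nonincreasing. By
the handshake lemma the values add up to `Σ dᵢ²`, so the list lies in `S_a^{q-h}`, and its squared
norm is `Σ (dᵢ + dⱼ)² = Σ dᵢ³ + 2 S(G)`. Since `‖·‖²` is Schur-convex, this is squeezed between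
`‖x_*‖²` and `‖x*‖²`.
-/

open Finset

noncomputable section

/-- Degree of a vertex (with classical decidability of adjacency). -/
def deg {V : Type*} [Fintype V] (G : SimpleGraph V) (v : V) : ℕ :=
  letI := Classical.decEq V
  letI := Classical.decRel G.Adj
  G.degree v

/-- The finite set of edges of `G`. -/
def edgeF {V : Type*} [Fintype V] (G : SimpleGraph V) : Finset (Sym2 V) :=
  letI := Classical.decEq V
  letI := Classical.decRel G.Adj
  G.edgeFinset

/-- Sum of the degrees of the two endpoints of an edge. -/
def dsum {V : Type*} [Fintype V] (G : SimpleGraph V) : Sym2 V → ℝ :=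
  Sym2.lift ⟨fun u v => (deg G u : ℝ) + deg G v, fun u v => by ring⟩

/-- Product of the degrees of the two endpoints of an edge. -/
def dprod {V : Type*} [Fintype V] (G : SimpleGraph V) : Sym2 V → ℝ :=
  Sym2.lift ⟨fun u v => (deg G u : ℝ) * deg G v, fun u v => by ring⟩

/-- The second Zagreb index `S(G) = Σ_{(v_i,v_j) ∈ E} d_i d_j`. -/
def zagreb2 {V : Type*} [Fintype V] (G : SimpleGraph V) : ℝ :=
  ∑ e ∈ edgeF G, dprod G e

section Graph

variable {V : Type*} [Fintype V] {G : SimpleGraph V}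

theorem deg_eq_degree [DecidableRel G.Adj] (v : V) : deg G v = G.degree v := by
  unfold deg SimpleGraph.degree
  congr!

theorem edgeF_eq_edgeFinset [DecidableRel G.Adj] [Fintype G.edgeSet] :
    edgeF G = G.edgeFinset := by
  unfold edgeF SimpleGraph.edgeFinset
  congr!

theorem mk_mem_edgeF {x y : V} : s(x, y) ∈ edgeF G ↔ G.Adj x y := by
  classical
  rw [edgeF_eq_edgeFinset, SimpleGraph.mem_edgeFinset, SimpleGraph.mem_edgeSet]

theorem dsum_mk (x y : V) : dsum G s(x, y) = deg G x + deg G y := rfl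

theorem deg_eq_one_iff_existsUnique_adj {v : V} : deg G v = 1 ↔ ∃! w, G.Adj v w := by
  classical
  rw [deg_eq_degree, SimpleGraph.degree_eq_one_iff_existsUnique_adj]

theorem eq_of_adj_of_deg_eq_one {v w w' : V} (hv : deg G v = 1) (hw : G.Adj v w)
    (hw' : G.Adj v w') : w = w' :=
  (deg_eq_one_iff_existsUnique_adj.mp hv).unique hw hw'

/-- Otherwise the edge `s(u, v)` would be a whole connected component. -/
theorem SimpleGraph.Connected.not_adj_of_deg_eq_one (hconn : G.Connected)
    (hcard : 3 ≤ Fintype.card V) {u v : V} (hu : deg G u = 1) (hv : deg G v = 1) :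
    ¬ G.Adj u v := by
  classical
  intro huv
  have hreach : ∀ w, Relation.ReflTransGen G.Adj u w → w = u ∨ w = v := by
    intro w hw
    induction hw with
    | refl => exact .inl rfl
    | tail _ hab ih =>
      rcases ih with rfl | rfl
      · exact .inr (eq_of_adj_of_deg_eq_one hu hab huv)
      · exact .inl (eq_of_adj_of_deg_eq_one hv hab huv.symm)
  have hsub : (univ : Finset V) ⊆ {u, v} := fun w _ => by
    simpa using hreach w ((SimpleGraph.reachable_iff_reflTransGen u w).mp (hconn.preconnected u w))
  have := (card_le_card hsub).trans (card_insert_le u {v})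
  rw [card_univ, card_singleton] at this
  omega

variable (G) in
theorem sum_edgeF_eq_sum_deg_mul (f : V → ℝ) (F : Sym2 V → ℝ)
    (hF : ∀ u v, F s(u, v) = f u + f v) :
    ∑ e ∈ edgeF G, F e = ∑ v, (deg G v : ℝ) * f v := by
  classical
  simp only [edgeF_eq_edgeFinset, deg_eq_degree]
  have hedge : ∑ d : G.Dart, F d.edge = 2 * ∑ e ∈ G.edgeFinset, F e := by
    rw [← sum_fiberwise_of_maps_to (g := SimpleGraph.Dart.edge) (t := G.edgeFinset)
      (fun d _ => SimpleGraph.mem_edgeFinset.mpr d.edge_mem), mul_sum]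
    refine sum_congr rfl fun e he => ?_
    rw [sum_congr rfl fun d hd => congrArg F (mem_filter.mp hd).2, sum_const,
      G.dart_edge_fiber_card e (SimpleGraph.mem_edgeFinset.mp he), two_nsmul, two_mul]
  have hfst : ∑ d : G.Dart, f d.fst = ∑ v, (G.degree v : ℝ) * f v := by
    rw [← sum_fiberwise univ (fun d : G.Dart => d.fst)]
    refine sum_congr rfl fun v _ => ?_
    rw [sum_congr rfl fun d hd => congrArg f (mem_filter.mp hd).2, sum_const,
      G.dart_fst_fiber_card_eq_degree v, nsmul_eq_mul]
  have hsnd : ∑ d : G.Dart, f d.snd = ∑ d : G.Dart, f d.fst :=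
    Equiv.sum_comp (Function.Involutive.toPerm _ SimpleGraph.Dart.symm_involutive)
      (fun d => f d.fst)
  have hsplit : ∑ d : G.Dart, F d.edge = ∑ d : G.Dart, f d.fst + ∑ d : G.Dart, f d.snd := by
    rw [← sum_add_distrib]
    exact sum_congr rfl fun d _ => hF d.fst d.snd
  linarith

theorem sum_edgeF_dsum : ∑ e ∈ edgeF G, dsum G e = ∑ v, (deg G v : ℝ) ^ 2 := by
  rw [sum_edgeF_eq_sum_deg_mul G (fun v => (deg G v : ℝ)) (dsum G) dsum_mk]
  simp only [sq]

theorem sum_edgeF_dsum_sq :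
    ∑ e ∈ edgeF G, dsum G e ^ 2 = ∑ v, (deg G v : ℝ) ^ 3 + 2 * zagreb2 G := by
  have hF : ∀ u v, dsum G s(u, v) ^ 2 - 2 * dprod G s(u, v) = (deg G u : ℝ) ^ 2 + deg G v ^ 2 :=
    fun u v => by simp only [dsum, dprod, Sym2.lift_mk]; ring
  have := sum_edgeF_eq_sum_deg_mul G (fun v => (deg G v : ℝ) ^ 2)
    (fun e => dsum G e ^ 2 - 2 * dprod G e) hF
  rw [sum_sub_distrib, ← mul_sum] at this
  rw [zagreb2, ← sub_eq_iff_eq_add, this]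
  simp only [← pow_succ']

theorem card_pendant_edges_eq [DecidablePred fun e : Sym2 V => ∃ v ∈ e, deg G v = 1]
    (hconn : G.Connected) (hcard : 3 ≤ Fintype.card V) :
    #{e ∈ edgeF G | ∃ v ∈ e, deg G v = 1} = #{v | deg G v = 1} := by
  classical
  obtain ⟨nb, hnb⟩ : ∃ nb : V → V, ∀ v, deg G v = 1 → G.Adj v (nb v) := by
    choose! nb hnb using fun v (hv : deg G v = 1) => (deg_eq_one_iff_existsUnique_adj.mp hv).exists
    exact ⟨nb, hnb⟩
  symm
  refine card_bij (fun v _ => s(v, nb v)) ?_ ?_ ?_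
  · intro v hv
    have hv := (mem_filter.mp hv).2
    exact mem_filter.mpr ⟨mk_mem_edgeF.mpr (hnb v hv), v, Sym2.mem_mk_left _ _, hv⟩
  · intro v hv w hw hvw
    have hv := (mem_filter.mp hv).2
    have hw := (mem_filter.mp hw).2
    rcases Sym2.eq_iff.mp hvw with ⟨h, -⟩ | ⟨rfl, -⟩
    · exact h
    · exact (hconn.not_adj_of_deg_eq_one hcard hw hv (hnb w hw)).elim
  · intro e he
    obtain ⟨hE, v, hve, hv⟩ := mem_filter.mp he
    refine ⟨v, mem_filter.mpr ⟨mem_univ v, hv⟩, ?_⟩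
    induction e using Sym2.ind with
    | _ x y =>
      have hxy := mk_mem_edgeF.mp hE
      rcases Sym2.mem_iff.mp hve with rfl | rfl
      · rw [eq_of_adj_of_deg_eq_one hv (hnb v hv) hxy]
      · rw [eq_of_adj_of_deg_eq_one hv (hnb v hv) hxy.symm, Sym2.eq_swap]

end Graph

/-- By Abel summation, `∑ fᵢ gᵢ = f_{q-1} G_q - ∑ (f_{i+1} - f_i) G_{i+1}` with
`G_k = ∑_{i<k} gᵢ`. -/
theorem sum_range_mul_nonneg_of_antitone {q : ℕ} {f g : ℕ → ℝ}
    (hf : ∀ i, i + 1 < q → f (i + 1) ≤ f i)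
    (hg : ∀ k, 0 < k → k < q → 0 ≤ ∑ i ∈ range k, g i)
    (hgq : ∑ i ∈ range q, g i = 0) :
    0 ≤ ∑ i ∈ range q, f i * g i := by
  have := sum_range_by_parts f g q
  simp only [smul_eq_mul, hgq, mul_zero, zero_sub] at this
  rw [this, neg_nonneg]
  refine sum_nonpos fun i hi => ?_
  have hi := mem_range.mp hi
  exact mul_nonpos_of_nonpos_of_nonneg (by linarith [hf i (by omega)])
    (hg (i + 1) i.succ_pos (by omega))

def Fin.extendZero {α : Type*} [Zero α] {q : ℕ} (x : Fin q → α) (i : ℕ) : α :=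
  if h : i < q then x ⟨i, h⟩ else 0

theorem Fin.sum_comp_eq_sum_range_extendZero {α M : Type*} [Zero α] [AddCommMonoid M] {q : ℕ}
    (x : Fin q → α) (g : α → M) :
    ∑ i, g (x i) = ∑ i ∈ range q, g (Fin.extendZero x i) := by
  rw [← Fin.sum_univ_eq_sum_range]
  simp [Fin.extendZero]

theorem psum_eq_sum_range_extendZero {q k : ℕ} (x : Fin q → ℝ) (hk : k ≤ q) :
    psum x k = ∑ i ∈ range k, Fin.extendZero x i := by
  have hterm (i : Fin q) : (if (i : ℕ) < k then x i else 0) =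
      if (i : ℕ) < k then Fin.extendZero x i else 0 := by
    simp [Fin.extendZero]
  rw [psum, sum_congr rfl fun i _ => hterm i,
    Fin.sum_univ_eq_sum_range (fun j => if j < k then Fin.extendZero x j else 0), ← sum_filter]
  congr 1
  ext i
  simp only [mem_filter, mem_range]
  omega

theorem sum_sq_le_sum_sq_of_maj {q : ℕ} {x y : Fin q → ℝ} (hy : Antitone y) (hxy : Maj y x) :
    ∑ i, y i ^ 2 ≤ ∑ i, x i ^ 2 := by
  set x' := Fin.extendZero x
  set y' := Fin.extendZero y
  have hsum : ∑ i ∈ range q, x' i = ∑ i ∈ range q, y' i :=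
    (Fin.sum_comp_eq_sum_range_extendZero x id).symm.trans
      (hxy.2.symm.trans (Fin.sum_comp_eq_sum_range_extendZero y id))
  -- `∑ x² - ∑ y² ≥ 2 ∑ y (x - y)`, and the latter is nonnegative by Abel summation.
  have habel : 0 ≤ ∑ i ∈ range q, y' i * (x' i - y' i) := by
    refine sum_range_mul_nonneg_of_antitone (fun i hi => ?_) (fun k hk0 hk => ?_) ?_
    · simp only [y', Fin.extendZero, dif_pos hi, dif_pos (by omega : i < q)]
      exact hy (Fin.mk_le_mk.mpr i.le_succ)
    · rw [sum_sub_distrib, ← psum_eq_sum_range_extendZero x hk.le,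
        ← psum_eq_sum_range_extendZero y hk.le, sub_nonneg]
      exact hxy.1 k hk0 (by omega)
    · rw [sum_sub_distrib, hsum, sub_self]
  have hsq : ∀ i, 2 * (y' i * (x' i - y' i)) ≤ x' i ^ 2 - y' i ^ 2 := fun i => by
    nlinarith [sq_nonneg (x' i - y' i)]
  have := sum_le_sum fun i (_ : i ∈ range q) => hsq i
  rw [← mul_sum, sum_sub_distrib] at this
  simp only [Fin.sum_comp_eq_sum_range_extendZero _ (· ^ 2)]
  linarith

theorem Finset.exists_equivFin_antitone {α β : Type*} [LinearOrder β] (s : Finset α)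
    (f : α → β) : ∃ σ : Fin #s ≃ s, Antitone fun i => f (σ i) := by
  set w : Fin #s → β := fun i => f (s.equivFin.symm i)
  refine ⟨Fin.revPerm.trans ((Tuple.sort w).trans s.equivFin.symm), fun i j hij => ?_⟩
  exact Tuple.monotone_sort w (Fin.rev_le_rev.mpr hij)

theorem antitone_finAppend {α : Type*} [Preorder α] {k l : ℕ} {u : Fin k → α}
    {v : Fin l → α} (hu : Antitone u) (hv : Antitone v) (huv : ∀ i j, v j ≤ u i) :
    Antitone (Fin.append u v) := by
  intro i j hij
  induction i using Fin.addCases with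
  | left i =>
    induction j using Fin.addCases with
    | left j => simpa using hu (show i ≤ j from hij)
    | right j => simpa using huv i j
  | right i =>
    induction j using Fin.addCases with
    | left j => exact absurd (Fin.le_def.mp hij) (by simp; omega)
    | right j => simpa using hv ((Fin.natAdd_le_natAdd_iff k).mp hij)

theorem append_mem_Sh {k l : ℕ} {a M1 M2 m1 m2 : ℝ} {u : Fin k → ℝ} {v : Fin l → ℝ}
    (hu : Antitone u) (hv : Antitone v) (hu_mem : ∀ i, u i ∈ Set.Icc m1 M1)
    (hv_mem : ∀ i, v i ∈ Set.Icc m2 M2) (hM2m1 : M2 ≤ m1) (hm1 : 0 ≤ m1) (hm2 : 0 ≤ m2)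
    (hsum : ∑ i, u i + ∑ i, v i = a) :
    Fin.append u v ∈ Sh (k + l) k a M1 M2 m1 m2 := by
  refine ⟨⟨antitone_finAppend hu hv fun i j => ?_, fun i => ?_, ?_⟩, fun i hi => ?_,
    fun i hi => ?_⟩
  · linarith [(hu_mem i).1, (hv_mem j).2]
  · induction i using Fin.addCases with
    | left i => simpa using hm1.trans (hu_mem i).1
    | right i => simpa using hm2.trans (hv_mem i).1
  · simpa [Fin.sum_univ_add] using hsum
  · induction i using Fin.addCases with
    | left i => simpa using hu_mem i
    | right i => simp at hi
  · induction i using Fin.addCases with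
    | left i => simp at hi; omega
    | right i => simpa using hv_mem i

/-- Sorting the values of `f` on `s` and on `t` and concatenating them. -/
theorem exists_mem_Sh_sum_sq_eq {α : Type*} (s t : Finset α) (f : α → ℝ) {q k : ℕ}
    {a M1 M2 m1 m2 : ℝ} (hk : #s = k) (hq : #s + #t = q)
    (hs : ∀ e ∈ s, f e ∈ Set.Icc m1 M1) (ht : ∀ e ∈ t, f e ∈ Set.Icc m2 M2)
    (hM2m1 : M2 ≤ m1) (hm1 : 0 ≤ m1) (hm2 : 0 ≤ m2)
    (ha : ∑ e ∈ s, f e + ∑ e ∈ t, f e = a) :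
    ∃ y ∈ Sh q k a M1 M2 m1 m2,
      ∑ i, y i ^ 2 = ∑ e ∈ s, f e ^ 2 + ∑ e ∈ t, f e ^ 2 := by
  subst hk hq
  obtain ⟨σ, hσ⟩ := s.exists_equivFin_antitone f
  obtain ⟨τ, hτ⟩ := t.exists_equivFin_antitone f
  have hsum (g : ℝ → ℝ) (r : Finset α) (ρ : Fin #r ≃ r) :
      ∑ i, g (f (ρ i)) = ∑ e ∈ r, g (f e) :=
    (Equiv.sum_comp ρ fun e => g (f e)).trans (sum_coe_sort r fun e => g (f e))
  refine ⟨Fin.append (fun i => f (σ i)) (fun i => f (τ i)),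
    append_mem_Sh hσ hτ (fun i => hs _ (σ i).2) (fun i => ht _ (τ i).2) hM2m1 hm1 hm2
      (ha ▸ congrArg₂ (· + ·) (hsum id s σ) (hsum id t τ)), ?_⟩
  simp only [Fin.sum_univ_add, Fin.append_left, Fin.append_right]
  rw [hsum (· ^ 2) s σ, hsum (· ^ 2) t τ]

section SortedDegrees

variable {n p : ℕ} {G : SimpleGraph (Fin n)}

theorem deg_le_deg_of_val_le (hsorted : ∀ i j : Fin n, i ≤ j → deg G j ≤ deg G i)
    {i j : Fin n} (h : (i : ℕ) ≤ j) : (deg G j : ℝ) ≤ deg G i := by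
  exact_mod_cast hsorted i j h

theorem val_lt_of_deg_ne_one (hone : ∀ i : Fin n, p ≤ (i : ℕ) → deg G i = 1) {v : Fin n}
    (hv : deg G v ≠ 1) : (v : ℕ) < p := by
  by_contra h
  exact hv (hone v (by omega))

theorem dsum_mem_Icc_of_not_pendant (hsorted : ∀ i j : Fin n, i ≤ j → deg G j ≤ deg G i)
    (hone : ∀ i : Fin n, p ≤ (i : ℕ) → deg G i = 1) (hn : 1 < n) (hp : p - 1 < n)
    {e : Sym2 (Fin n)} (he : e ∈ edgeF G) (hpe : ¬ ∃ v ∈ e, deg G v = 1) :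
    dsum G e ∈ Set.Icc ((deg G ⟨p - 1, hp⟩ : ℝ) + deg G ⟨p - 2, by omega⟩)
      ((deg G ⟨0, by omega⟩ : ℝ) + deg G ⟨1, hn⟩) := by
  induction e using Sym2.ind with
  | _ x y =>
    have hxy : x ≠ y := (mk_mem_edgeF.mp he).ne
    have hx := val_lt_of_deg_ne_one hone fun h => hpe ⟨x, Sym2.mem_mk_left x y, h⟩
    have hy := val_lt_of_deg_ne_one hone fun h => hpe ⟨y, Sym2.mem_mk_right x y, h⟩
    wlog hlt : x < y generalizing x y
    · rw [Sym2.eq_swap] at he hpe ⊢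
      exact this y x he hpe hxy.symm hy hx (lt_of_le_of_ne (not_lt.mp hlt) hxy.symm)
    have hlt : (x : ℕ) < y := hlt
    rw [dsum_mk]
    constructor
    · linarith [deg_le_deg_of_val_le hsorted (i := x) (j := ⟨p - 2, by omega⟩)
          (by dsimp; omega),
        deg_le_deg_of_val_le hsorted (i := y) (j := ⟨p - 1, hp⟩) (by dsimp; omega)]
    · linarith [deg_le_deg_of_val_le hsorted (i := ⟨0, by omega⟩) (j := x) (by dsimp; omega),
        deg_le_deg_of_val_le hsorted (i := ⟨1, hn⟩) (j := y) (by dsimp; omega)]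

theorem dsum_mem_Icc_of_pendant (hconn : G.Connected) (hcard : 3 ≤ n)
    (hsorted : ∀ i j : Fin n, i ≤ j → deg G j ≤ deg G i)
    (hone : ∀ i : Fin n, p ≤ (i : ℕ) → deg G i = 1) (hp : p - 1 < n)
    {e : Sym2 (Fin n)} (he : e ∈ edgeF G) (hpe : ∃ v ∈ e, deg G v = 1) :
    dsum G e ∈ Set.Icc (1 + (deg G ⟨p - 1, hp⟩ : ℝ)) (1 + deg G ⟨0, by omega⟩) := by
  obtain ⟨v, hve, hv⟩ := hpe
  obtain ⟨w, rfl⟩ := Sym2.mem_iff_exists.mp hve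
  have hvw := mk_mem_edgeF.mp he
  have hw := val_lt_of_deg_ne_one hone fun hw =>
    hconn.not_adj_of_deg_eq_one (by simpa using hcard) hv hw hvw
  simp only [dsum_mk, hv, Nat.cast_one]
  constructor
  · linarith [deg_le_deg_of_val_le hsorted (i := w) (j := ⟨p - 1, hp⟩) (by dsimp; omega)]
  · linarith [deg_le_deg_of_val_le hsorted (i := ⟨0, by omega⟩) (j := w) (by dsimp; omega)]

end SortedDegrees

/-- Bounds for the second Zagreb index via the extremal elements of `S_a^{q-h}` (`q = |E|`):
`(‖x_*‖₂² − Σ d_i³)/2 ≤ S(G) ≤ (‖x*‖₂² − Σ d_i³)/2`. -/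
theorem zagreb2_bounds (n h q : ℕ) (hn : 4 ≤ n)
    (G : SimpleGraph (Fin n)) (hconn : G.Connected)
    (hq : (edgeF G).card = q)
    (hsorted : ∀ i j : Fin n, i ≤ j → deg G j ≤ deg G i)
    (hone : ∀ i : Fin n, n - h ≤ (i : ℕ) → deg G i = 1)
    (hpend : (Finset.univ.filter fun v => deg G v = 1).card = h)
    (hlim : 1 + deg G (⟨0, by omega⟩ : Fin n) ≤
        deg G (⟨n - h - 1, by omega⟩ : Fin n) + deg G (⟨n - h - 2, by omega⟩ : Fin n))
    (m1 m2 M1 M2 a : ℝ)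
    (hm1 : m1 = deg G (⟨n - h - 1, by omega⟩ : Fin n) + deg G (⟨n - h - 2, by omega⟩ : Fin n))
    (hm2 : m2 = 1 + deg G (⟨n - h - 1, by omega⟩ : Fin n))
    (hM1 : M1 = deg G (⟨0, by omega⟩ : Fin n) + deg G (⟨1, by omega⟩ : Fin n))
    (hM2 : M2 = 1 + deg G (⟨0, by omega⟩ : Fin n))
    (ha : a = ∑ i : Fin n, (deg G i : ℝ) ^ 2)
    (xM xm : Fin q → ℝ)
    (hxM : xM ∈ Sh q (q - h) a M1 M2 m1 m2 ∧ ∀ y ∈ Sh q (q - h) a M1 M2 m1 m2, Maj y xM)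
    (hxm : xm ∈ Sh q (q - h) a M1 M2 m1 m2 ∧ ∀ y ∈ Sh q (q - h) a M1 M2 m1 m2, Maj xm y) :
    ((∑ i, (xm i) ^ 2) - ∑ v : Fin n, (deg G v : ℝ) ^ 3) / 2 ≤ zagreb2 G ∧
    zagreb2 G ≤ ((∑ i, (xM i) ^ 2) - ∑ v : Fin n, (deg G v : ℝ) ^ 3) / 2 := by
  classical
  have hcard : 3 ≤ Fintype.card (Fin n) := by rw [Fintype.card_fin]; omega
  have hpendant : #{e ∈ edgeF G | ∃ v ∈ e, deg G v = 1} = h :=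
    (card_pendant_edges_eq hconn hcard).trans hpend
  have hedges : #{e ∈ edgeF G | ¬ ∃ v ∈ e, deg G v = 1} +
      #{e ∈ edgeF G | ∃ v ∈ e, deg G v = 1} = q := by
    rw [add_comm, card_filter_add_card_filter_not, hq]
  have hinnerBounds : ∀ e ∈ {e ∈ edgeF G | ¬ ∃ v ∈ e, deg G v = 1},
      dsum G e ∈ Set.Icc m1 M1 := by
    intro e he
    rw [hm1, hM1]
    exact dsum_mem_Icc_of_not_pendant hsorted hone (by omega) (by omega)
      (mem_filter.mp he).1 (mem_filter.mp he).2
  have hpendantBounds : ∀ e ∈ {e ∈ edgeF G | ∃ v ∈ e, deg G v = 1},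
      dsum G e ∈ Set.Icc m2 M2 := by
    intro e he
    rw [hm2, hM2]
    exact dsum_mem_Icc_of_pendant hconn (by omega) hsorted hone (by omega)
      (mem_filter.mp he).1 (mem_filter.mp he).2
  obtain ⟨y, hyS, hy⟩ := exists_mem_Sh_sum_sq_eq (k := q - h) (a := a) _ _ (dsum G)
    (by omega) hedges hinnerBounds hpendantBounds (by rw [hM2, hm1]; exact_mod_cast hlim)
    (by rw [hm1]; positivity) (by rw [hm2]; positivity)
    (by rw [add_comm, sum_filter_add_sum_filter_not, sum_edgeF_dsum, ha])
  rw [add_comm, sum_filter_add_sum_filter_not, sum_edgeF_dsum_sq] at hy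
  have hupper := sum_sq_le_sum_sq_of_maj hyS.1.1 (hxM.2 y hyS)
  have hlower := sum_sq_le_sum_sq_of_maj hxm.1.1.1 (hxm.2 y hyS)
  constructor <;> linarith
end
end
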